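/- arXiv:1512.00617 — 11 statements merged into one kernel-verified Lean document; each statement's English description precedes it below -/
import Mathlib

section
/- Let n ≥ 2 and let m_1 < m_2 < ... < m_n be an arithmetic sequence of positive integers with common difference d and gcd(m_1, d) = 1. Write m_1 = q(n-1) + r with q ∈ ℕ, r ∈ {1,...,n-1}, and set α := q + d. Then α + 1 = min { b ∈ ℤ⁺ : b·m_1 ∈ ℕm_2 + ℕm_3 + ... + ℕm_n }, i.e., α + 1 is the least positive integer b such that b·m_1 lies in the numerical semigroup generated by m_2, ..., m_n. -/
/-!
Write `b * m₁ = ∑ δᵢ mᵢ` with `k = ∑ δᵢ` summands and weight `t = ∑ δᵢ (i - 1)`, so that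
`b * m₁ = k * m₁ + t * d` and `k ≤ t ≤ k (n - 1)`. Coprimality forces `t = s * m₁` and
`b = k + s * d` with `s ≥ 1`, and `s * m₁ ≤ k (n - 1)` gives `k > s * q`; hence `b ≥ q + d + 1`.
Equality is attained by `(q + d + 1) m₁ = q mₙ + m_{r+1}`.
-/

open Finset

section ArithmeticSequence

variable {n a d : ℕ} {m : ℕ → ℕ}

theorem sum_mul_eq_of_arithSeq (hm : ∀ i, 1 ≤ i → i ≤ n → m i = a + (i - 1) * d)
    (δ : ℕ → ℕ) :
    ∑ i ∈ Icc 2 n, δ i * m i =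
      (∑ i ∈ Icc 2 n, δ i) * a + (∑ i ∈ Icc 2 n, δ i * (i - 1)) * d := by
  rw [sum_mul, sum_mul, ← sum_add_distrib]
  refine sum_congr rfl fun i hi => ?_
  rw [mem_Icc] at hi
  rw [hm i (by omega) hi.2]
  ring

theorem sum_le_sum_mul_pred (δ : ℕ → ℕ) :
    ∑ i ∈ Icc 2 n, δ i ≤ ∑ i ∈ Icc 2 n, δ i * (i - 1) :=
  sum_le_sum fun i hi => Nat.le_mul_of_pos_right _ (by rw [mem_Icc] at hi; omega)

theorem sum_mul_pred_le (δ : ℕ → ℕ) :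
    ∑ i ∈ Icc 2 n, δ i * (i - 1) ≤ (∑ i ∈ Icc 2 n, δ i) * (n - 1) := by
  rw [sum_mul]
  exact sum_le_sum fun i hi => Nat.mul_le_mul_left _ (by rw [mem_Icc] at hi; omega)

end ArithmeticSequence

theorem exists_eq_mul_and_eq_add_of_mul_eq {a d b k t : ℕ} (had : a.Coprime d) (ha : 0 < a)
    (h : b * a = k * a + t * d) : ∃ s, t = a * s ∧ b = k + s * d := by
  have hat : a ∣ t := by
    refine had.dvd_of_dvd_mul_right ((Nat.dvd_add_right (dvd_mul_left a k)).mp ?_)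
    exact h ▸ dvd_mul_left a b
  obtain ⟨s, rfl⟩ := hat
  refine ⟨s, rfl, Nat.eq_of_mul_eq_mul_right ha ?_⟩
  rw [h]
  ring

theorem add_add_one_le_of_mul_eq_sum {n d m1 q r b : ℕ} {m δ : ℕ → ℕ}
    (hgcd : Nat.gcd m1 d = 1) (hm : ∀ i, 1 ≤ i → i ≤ n → m i = m1 + (i - 1) * d)
    (hdiv : m1 = q * (n - 1) + r) (hr1 : 1 ≤ r) (hb : 0 < b)
    (h : b * m1 = ∑ i ∈ Icc 2 n, δ i * m i) :
    q + d + 1 ≤ b := by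
  rw [sum_mul_eq_of_arithSeq hm] at h
  have hkt := sum_le_sum_mul_pred (n := n) δ
  have htk := sum_mul_pred_le (n := n) δ
  set k := ∑ i ∈ Icc 2 n, δ i
  set t := ∑ i ∈ Icc 2 n, δ i * (i - 1)
  obtain ⟨s, ht, rfl⟩ := exists_eq_mul_and_eq_add_of_mul_eq hgcd (by omega) h
  have hs : 0 < s := by
    refine Nat.pos_of_ne_zero fun hs => ?_
    simp only [hs, mul_zero, zero_mul, add_zero] at ht hb
    omega
  have hsq : s * q < k := by
    refine Nat.lt_of_mul_lt_mul_right (a := n - 1) ?_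
    have : 1 ≤ s * r := Nat.mul_le_mul hs hr1
    rw [ht, hdiv] at htk
    nlinarith
  have hq : q ≤ s * q := Nat.le_mul_of_pos_left q hs
  have hd : d ≤ s * d := Nat.le_mul_of_pos_left d hs
  omega

theorem stmt_1_general (n d m1 q r : ℕ) (m : ℕ → ℕ)
    (hgcd : Nat.gcd m1 d = 1)
    (hm : ∀ i, 1 ≤ i → i ≤ n → m i = m1 + (i - 1) * d)
    (hdiv : m1 = q * (n - 1) + r) (hr1 : 1 ≤ r) (hr2 : r ≤ n - 1) :
    IsLeast {b : ℕ | 0 < b ∧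
        ∃ δ : ℕ → ℕ, b * m1 = ∑ i ∈ Finset.Icc 2 n, δ i * m i}
      (q + d + 1) := by
  refine ⟨⟨by omega, fun i => (if i = n then q else 0) + (if i = r + 1 then 1 else 0), ?_⟩,
    fun b ⟨hb, δ, h⟩ => add_add_one_le_of_mul_eq_sum hgcd hm hdiv hr1 hb h⟩
  have hn : n ∈ Icc 2 n := mem_Icc.mpr ⟨by omega, le_rfl⟩
  have hr : r + 1 ∈ Icc 2 n := mem_Icc.mpr ⟨by omega, by omega⟩
  simp only [add_mul, ite_mul, zero_mul, one_mul, sum_add_distrib, sum_ite_eq', if_pos hn,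
    if_pos hr]
  rw [hm n (by omega) le_rfl, hm (r + 1) (by omega) (by omega), Nat.add_sub_cancel, hdiv]
  ring

/-- α + 1 is the least positive b with b·m₁ in the semigroup generated by m₂,…,mₙ. -/
theorem stmt_1 (n d m1 q r : ℕ) (m : ℕ → ℕ)
    (hn : 2 ≤ n) (hd : 1 ≤ d) (hm1 : 1 ≤ m1)
    (hgcd : Nat.gcd m1 d = 1)
    (hm : ∀ i, 1 ≤ i → i ≤ n → m i = m1 + (i - 1) * d)
    (hdiv : m1 = q * (n - 1) + r) (hr1 : 1 ≤ r) (hr2 : r ≤ n - 1) :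
    IsLeast {b : ℕ | 0 < b ∧
        ∃ δ : ℕ → ℕ, b * m1 = ∑ i ∈ Finset.Icc 2 n, δ i * m i}
      (q + d + 1) :=
  stmt_1_general n d m1 q r m hgcd hm hdiv hr1 hr2
end

section
/- Let n ≥ 2, and let m_1 < ... < m_n be an arithmetic sequence with gcd(m_1, d) = 1, and write m_1 = q(n-1)+r with r ∈ {1,...,n-1}, α := q+d, k := n-r. Then for all integers s with 0 ≤ s < α, the number of monomials of degree s not in the ideal generated by {x_i x_j : 2 ≤ i ≤ j ≤ n-1} ∪ {x_1^α x_i : 1 ≤ i ≤ k} in the polynomial ring K[x_1,...,x_{n+1}] equals C(s+2, 2) + (n-2)·C(s+1, 2). -/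
/-!
Since `γ 1 ≤ s < q + d`, none of the generators `x_1^α x_i` divides a monomial of degree `s`, so
only the quadratic generators matter, and they exclude exactly the monomials of degree at least 2
in the middle variables `x_2, …, x_{n-1}`. A standard monomial of degree `s` is thus a monomial of
degree `s` in `x_1, x_n, x_{n+1}`, or one of the `n - 2` middle variables times such a monomial
of degree `s - 1`; stars and bars counts these as `C(s+2, 2)` and `C(s+1, 2)`.
-/

open Finset

namespace Finset

variable {ι : Type*} [DecidableEq ι]

theorem card_piAntidiag_nat (s : Finset ι) (n : ℕ) :
    #(piAntidiag s n) = (#s + n - 1).choose n := by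
  rw [← card_finsuppAntidiag_nat_eq_choose, finsuppAntidiag, card_map, card_attach]

theorem card_filter_piAntidiag_union_sum_eq {A B : Finset ι} (hAB : Disjoint A B) (a b : ℕ) :
    #{f ∈ piAntidiag (A ∪ B) (a + b) | ∑ i ∈ B, f i = b} =
      #(piAntidiag A a) * #(piAntidiag B b) := by
  have hBA : ∀ i ∈ A, i ∉ B := fun _ hi => disjoint_left.mp hAB hi
  rw [← card_product]
  symm
  apply card_nbij' (fun p => p.1 + p.2)
    (fun f => (fun i => if i ∈ A then f i else 0, fun i => if i ∈ B then f i else 0))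
  · rintro ⟨g, h⟩ hp
    simp only [mem_coe, mem_product, mem_piAntidiag] at hp
    obtain ⟨⟨rfl, hgA⟩, ⟨rfl, hhB⟩⟩ := hp
    have hgB : ∑ i ∈ B, g i = 0 :=
      sum_eq_zero fun i hi => by_contra fun h0 => hBA i (hgA i h0) hi
    have hhA : ∑ i ∈ A, h i = 0 :=
      sum_eq_zero fun i hi => by_contra fun h0 => hBA i hi (hhB i h0)
    simp only [mem_coe, mem_filter, mem_piAntidiag, Pi.add_apply, sum_add_distrib,
      sum_union hAB, hgB, hhA, add_zero, zero_add, mem_union, true_and]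
    grind
  · intro f hf
    simp only [mem_coe, mem_filter, mem_piAntidiag, sum_union hAB] at hf
    simp only [mem_coe, mem_product, mem_piAntidiag, sum_ite_mem, inter_self]
    grind
  · rintro ⟨g, h⟩ hp
    simp only [mem_coe, mem_product, mem_piAntidiag] at hp
    ext i <;> simp only [Pi.add_apply] <;> grind
  · intro f hf
    simp only [mem_coe, mem_filter, mem_piAntidiag] at hf
    ext i
    simp only [Pi.add_apply]
    grind

theorem card_filter_piAntidiag_union_sum_le_one {A B : Finset ι} (hAB : Disjoint A B) (s : ℕ) :
    #{f ∈ piAntidiag (A ∪ B) (s + 1) | ∑ i ∈ B, f i ≤ 1} =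
      #(piAntidiag A (s + 1)) + #(piAntidiag A s) * #B := by
  classical
  have hsplit : {f ∈ piAntidiag (A ∪ B) (s + 1) | ∑ i ∈ B, f i ≤ 1} =
      {f ∈ piAntidiag (A ∪ B) (s + 1 + 0) | ∑ i ∈ B, f i = 0} ∪
        {f ∈ piAntidiag (A ∪ B) (s + 1) | ∑ i ∈ B, f i = 1} := by
    ext f
    simp only [mem_union, mem_filter, add_zero, ← and_or_left, Nat.le_one_iff_eq_zero_or_eq_one]
  rw [hsplit, card_union_of_disjoint (disjoint_filter.2 fun _ _ h => by omega),
    card_filter_piAntidiag_union_sum_eq hAB (s + 1) 0, card_filter_piAntidiag_union_sum_eq hAB s 1,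
    piAntidiag_zero, card_singleton, mul_one, card_piAntidiag_nat B 1, Nat.add_sub_cancel,
    Nat.choose_one_right]

end Finset

theorem forall_quadratic_not_dvd_iff_sum_Icc_le_one {a b : ℕ} (γ : ℕ → ℕ) :
    (∀ i j, a ≤ i → i ≤ j → j ≤ b → ¬ (if i = j then 2 ≤ γ i else 1 ≤ γ i ∧ 1 ≤ γ j)) ↔
      ∑ i ∈ Icc a b, γ i ≤ 1 := by
  constructor
  · intro h
    have hle : ∀ i ∈ Icc a b, γ i ≤ 1 := fun i hi => by
      have := h i i (mem_Icc.1 hi).1 le_rfl (mem_Icc.1 hi).2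
      simp only [if_true] at this
      omega
    have hsupp : #{i ∈ Icc a b | γ i ≠ 0} ≤ 1 := by
      refine card_le_one.2 fun i hi j hj => ?_
      simp only [mem_filter, mem_Icc] at hi hj
      by_contra hij
      rcases lt_or_gt_of_ne hij with hlt | hlt
      · exact h i j hi.1.1 hlt.le hj.1.2 (by simp only [if_neg hij]; omega)
      · exact h j i hj.1.1 hlt.le hi.1.2 (by simp only [if_neg (Ne.symm hij)]; omega)
    calc ∑ i ∈ Icc a b, γ i = ∑ i ∈ Icc a b with γ i ≠ 0, γ i := (sum_filter_ne_zero _).symm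
      _ ≤ #{i ∈ Icc a b | γ i ≠ 0} • 1 :=
          sum_le_card_nsmul _ _ _ fun i hi => hle i (mem_filter.1 hi).1
      _ ≤ 1 := by simpa using hsupp
  · intro h i j hai hij hjb
    split_ifs with heq
    · subst heq
      have := single_le_sum (fun k _ => Nat.zero_le (γ k)) (mem_Icc.2 ⟨hai, hjb⟩)
      omega
    · have : ∑ k ∈ {i, j}, γ k ≤ ∑ k ∈ Icc a b, γ k :=
        sum_le_sum_of_subset (by intro k; simp only [mem_insert, mem_singleton, mem_Icc]; omega)
      rw [sum_pair heq] at this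
      omega

theorem stmt_4_general (n d q r s : ℕ)
    (hn : 2 ≤ n) (hs : s < q + d) :
    Set.ncard {γ : ℕ → ℕ |
        (∀ i, γ i ≠ 0 → 1 ≤ i ∧ i ≤ n + 1) ∧
        (∑ i ∈ Finset.Icc 1 (n + 1), γ i) = s ∧
        (∀ i j, 2 ≤ i → i ≤ j → j ≤ n - 1 →
          ¬ (if i = j then 2 ≤ γ i else 1 ≤ γ i ∧ 1 ≤ γ j)) ∧
        (∀ i, 1 ≤ i → i ≤ n - r →
          ¬ (if i = 1 then q + d + 1 ≤ γ 1 else q + d ≤ γ 1 ∧ 1 ≤ γ i))} =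
      Nat.choose (s + 2) 2 + (n - 2) * Nat.choose (s + 1) 2 := by
  set A : Finset ℕ := {1, n, n + 1}
  set B := Icc 2 (n - 1)
  have hAB : Disjoint A B := disjoint_left.2 fun i hi => by
    simp only [A, B, mem_insert, mem_singleton, mem_Icc] at hi ⊢
    omega
  have hunion : A ∪ B = Icc 1 (n + 1) := by
    ext i; simp only [A, B, mem_union, mem_insert, mem_singleton, mem_Icc]; omega
  have hA : ∀ m, #(piAntidiag A m) = (m + 2).choose 2 := fun m => by
    rw [card_piAntidiag_nat, card_eq_three.2 ⟨1, n, n + 1, by omega, by omega, by omega, rfl⟩,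
      show 3 + m - 1 = m + 2 by omega, Nat.choose_symm_add]
  have hB : #B = n - 2 := by simp only [B, Nat.card_Icc]; omega
  have hcard : #{f ∈ piAntidiag (A ∪ B) s | ∑ i ∈ B, f i ≤ 1} =
      (s + 2).choose 2 + (n - 2) * (s + 1).choose 2 := by
    cases s with
    | zero => simp [filter_singleton]
    | succ s => rw [card_filter_piAntidiag_union_sum_le_one hAB, hA, hA, hB, mul_comm]
  rw [← hcard, ← Set.ncard_coe_finset]
  congr 1
  ext γ
  simp only [Set.mem_ofPred_eq, coe_filter, mem_piAntidiag, hunion, mem_Icc, B,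
    forall_quadratic_not_dvd_iff_sum_Icc_le_one]
  constructor
  · rintro ⟨hsupp, hsum, hmid, -⟩
    exact ⟨⟨hsum, hsupp⟩, hmid⟩
  · rintro ⟨⟨hsum, hsupp⟩, hmid⟩
    have hγ1 : γ 1 ≤ s :=
      hsum ▸ single_le_sum (fun _ _ => Nat.zero_le _) (mem_Icc.2 ⟨le_rfl, by omega⟩)
    exact ⟨hsupp, hsum, hmid, fun i _ _ => by split_ifs <;> omega⟩

/-- Hilbert function of the initial ideal in degrees s < α:
the number of standard monomials of degree s equals C(s+2,2) + (n-2)C(s+1,2). -/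
theorem stmt_4 (n d m1 q r s : ℕ)
    (hn : 2 ≤ n) (hd : 1 ≤ d) (hm1 : 1 ≤ m1)
    (hgcd : Nat.gcd m1 d = 1)
    (hdiv : m1 = q * (n - 1) + r) (hr1 : 1 ≤ r) (hr2 : r ≤ n - 1)
    (hs : s < q + d) :
    Set.ncard {γ : ℕ → ℕ |
        (∀ i, γ i ≠ 0 → 1 ≤ i ∧ i ≤ n + 1) ∧
        (∑ i ∈ Finset.Icc 1 (n + 1), γ i) = s ∧
        (∀ i j, 2 ≤ i → i ≤ j → j ≤ n - 1 →
          ¬ (if i = j then 2 ≤ γ i else 1 ≤ γ i ∧ 1 ≤ γ j)) ∧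
        (∀ i, 1 ≤ i → i ≤ n - r →
          ¬ (if i = 1 then q + d + 1 ≤ γ 1 else q + d ≤ γ 1 ∧ 1 ≤ γ i))} =
      Nat.choose (s + 2) 2 + (n - 2) * Nat.choose (s + 1) 2 :=
  stmt_4_general n d q r s hn hs
end

section
/- Let n ≥ 2 and let m_1 < ... < m_n be an arithmetic sequence with common difference d, gcd(m_1, d) = 1, m_1 = q(n-1)+r with r ∈ {1,...,n-1}, α := q+d, k := n-r. Then for all integers s ≥ α, the number of monomials of degree s in K[x_1,...,x_{n+1}] not in the monomial ideal generated by {x_i x_j : 2 ≤ i ≤ j ≤ n-1} ∪ {x_1^α x_i : 1 ≤ i ≤ k} equals m_n·s + α(2 - n + k) - C(α+1, 2) - (n-2)·C(α, 2) + 1. -/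
/-!
A monomial of degree `s` outside the ideal contains at most one of the middle variables
`x₂, …, x_{n-1}`, to the first power, so it is `x₁^a x_j x_n^b x_{n+1}^c` with `a ≤ α`, and with
`j > k` when `a = α`. It is determined by `(a, j, b)`. For `a < α` there are `(n - 1)(s - a) + 1`
such monomials and for `a = α` there are `(n - k)(s - α) + 1`; summing over `a` and using
`mₙ = (n - 1)α + n - k` gives the formula.
-/

open Finset

namespace StdMonomial

variable {n s α k : ℕ}

lemma sum_Icc_one_succ_eq (hn : 2 ≤ n) (γ : ℕ → ℕ) :
    ∑ i ∈ Icc 1 (n + 1), γ i = γ 1 + γ n + γ (n + 1) + ∑ i ∈ Icc 2 (n - 1), γ i := by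
  have : Icc 1 (n + 1) = insert 1 (insert n (insert (n + 1) (Icc 2 (n - 1)))) := by
    ext i; simp only [mem_Icc, mem_insert]; omega
  rw [this, sum_insert (by simp; omega), sum_insert (by simp; omega),
    sum_insert (by simp), add_assoc, add_assoc]

lemma card_biUnion_singleton_product {β γ : Type*} [DecidableEq β] [DecidableEq γ]
    (I : Finset β) (t : β → Finset γ) :
    #(I.biUnion fun i => {i} ×ˢ t i) = ∑ i ∈ I, #(t i) := by
  rw [card_biUnion fun i _ i' _ h => disjoint_product.2 (.inl (disjoint_singleton.2 h))]
  simp only [card_product, card_singleton, one_mul]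

lemma sum_range_sub_eq :
    ∑ a ∈ range α, ((s : ℤ) - a) = α * s - α.choose 2 := by
  rw [sum_sub_distrib, sum_const, card_range, nsmul_eq_mul, ← Nat.cast_sum, sum_range_id,
    Nat.choose_two_right]

/-- Exponent vectors of the monomials of degree `s` in `x₁, …, x_{n+1}` outside the ideal
`(xᵢ xⱼ : 2 ≤ i ≤ j ≤ n - 1) + (x₁^α xᵢ : 1 ≤ i ≤ k)`. -/
def standardMonomials (n s α k : ℕ) : Set (ℕ → ℕ) :=
  {γ | (∀ i, γ i ≠ 0 → 1 ≤ i ∧ i ≤ n + 1) ∧ (∑ i ∈ Icc 1 (n + 1), γ i) = s ∧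
    (∀ i j, 2 ≤ i → i ≤ j → j ≤ n - 1 → ¬ (if i = j then 2 ≤ γ i else 1 ≤ γ i ∧ 1 ≤ γ j)) ∧
    (∀ i, 1 ≤ i → i ≤ k → ¬ (if i = 1 then α + 1 ≤ γ 1 else α ≤ γ 1 ∧ 1 ≤ γ i))}

/-- `x₁^a x_j x_n^b x_{n+1}^c` for `p = (a, j, b)`, with `c` fixed by the degree `s`;
`j = 0` stands for no middle variable. -/
def exponent (n s : ℕ) (p : ℕ × ℕ × ℕ) : ℕ → ℕ := fun i =>
  if i = 1 then p.1
  else if i = n then p.2.2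
  else if i = n + 1 then s - p.1 - (if p.2.1 = 0 then 0 else 1) - p.2.2
  else if p.2.1 ≠ 0 ∧ i = p.2.1 then 1 else 0

def params (n s α k : ℕ) : Finset (ℕ × ℕ × ℕ) :=
  (range (α + 1)).biUnion fun a => {a} ×ˢ
    (insert 0 (Icc (if a = α then k + 1 else 2) (n - 1))).biUnion fun j =>
      {j} ×ˢ range (s + 1 - a - if j = 0 then 0 else 1)

lemma mem_params {a j b : ℕ} :
    (a, j, b) ∈ params n s α k ↔ a ≤ α ∧
      (j = 0 ∨ (if a = α then k + 1 else 2) ≤ j ∧ j ≤ n - 1) ∧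
      a + (if j = 0 then 0 else 1) + b ≤ s := by
  simp only [params, mem_biUnion, mem_product, mem_singleton, mem_range, mem_insert, mem_Icc]
  constructor
  · rintro ⟨a, ha, rfl, j, hj, rfl, hb⟩
    exact ⟨by omega, hj, by omega⟩
  · rintro ⟨ha, hj, hb⟩
    exact ⟨a, by omega, rfl, j, hj, rfl, by omega⟩

lemma sum_middle {γ : ℕ → ℕ} {j : ℕ} (hj : j = 0 ∨ j ∈ Icc 2 (n - 1))
    (hγ : ∀ i ∈ Icc 2 (n - 1), γ i = if j ≠ 0 ∧ i = j then 1 else 0) :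
    ∑ i ∈ Icc 2 (n - 1), γ i = if j = 0 then 0 else 1 := by
  rw [sum_congr rfl hγ]
  rcases hj with rfl | hj
  · simp
  · simp [hj, show j ≠ 0 by simp at hj; omega]

lemma exists_middle_index {γ : ℕ → ℕ}
    (hγ : ∀ i j, 2 ≤ i → i ≤ j → j ≤ n - 1 → ¬ (if i = j then 2 ≤ γ i else 1 ≤ γ i ∧ 1 ≤ γ j)) :
    ∃ j, (j = 0 ∨ j ∈ Icc 2 (n - 1)) ∧
      ∀ i ∈ Icc 2 (n - 1), γ i = if j ≠ 0 ∧ i = j then 1 else 0 := by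
  by_cases h : ∃ j ∈ Icc 2 (n - 1), γ j ≠ 0
  · obtain ⟨j, hj, hγj⟩ := h
    refine ⟨j, .inr hj, fun i hi => ?_⟩
    rw [mem_Icc] at hi hj
    rcases lt_trichotomy i j with hij | rfl | hij
    · have := hγ i j hi.1 hij.le hj.2
      rw [if_neg hij.ne] at this
      rw [if_neg (by omega)]
      omega
    · have := hγ i i hi.1 le_rfl hi.2
      rw [if_pos rfl] at this
      rw [if_pos (by omega)]
      omega
    · have := hγ j i hj.1 hij.le hi.2
      rw [if_neg hij.ne] at this
      rw [if_neg (by omega)]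
      omega
  · push Not at h
    exact ⟨0, .inl rfl, fun i hi => by simp [h i hi]⟩

lemma middle_of_mem_params (hk1 : 1 ≤ k) {a j b : ℕ} (hp : (a, j, b) ∈ params n s α k) :
    j = 0 ∨ j ∈ Icc 2 (n - 1) := by
  obtain ⟨-, hj, -⟩ := mem_params.1 hp
  rw [mem_Icc]
  split_ifs at hj <;> omega

section exponent

variable {a j b : ℕ}

@[simp] lemma exponent_one : exponent n s (a, j, b) 1 = a := by simp [exponent]

lemma exponent_self (hn : 2 ≤ n) : exponent n s (a, j, b) n = b := by
  simp [exponent, show n ≠ 1 by omega]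

lemma exponent_succ (hn : 2 ≤ n) :
    exponent n s (a, j, b) (n + 1) = s - a - (if j = 0 then 0 else 1) - b := by
  simp [exponent, show n ≠ 0 by omega]

lemma exponent_of_ne {i : ℕ} (h1 : i ≠ 1) (hn : i ≠ n) (hn1 : i ≠ n + 1) :
    exponent n s (a, j, b) i = if j ≠ 0 ∧ i = j then 1 else 0 := by
  simp only [exponent, if_neg h1, if_neg hn, if_neg hn1]

lemma exponent_middle {i : ℕ} (hi : i ∈ Icc 2 (n - 1)) :
    exponent n s (a, j, b) i = if j ≠ 0 ∧ i = j then 1 else 0 := by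
  rw [mem_Icc] at hi
  exact exponent_of_ne (by omega) (by omega) (by omega)

end exponent

lemma exponent_mem (hn : 2 ≤ n) (hk1 : 1 ≤ k) (hk : k ≤ n - 1) {a j b : ℕ}
    (hp : (a, j, b) ∈ params n s α k) :
    exponent n s (a, j, b) ∈ standardMonomials n s α k := by
  obtain ⟨ha, hj, hdeg⟩ := mem_params.1 hp
  have hj' := middle_of_mem_params hk1 hp
  refine ⟨fun i hi => ?_, ?_, fun i i' h2 hii' hi' => ?_, fun i h1 hik => ?_⟩
  · by_contra hout
    rw [exponent_of_ne (by omega) (by omega) (by omega), if_neg (by omega)] at hi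
    exact hi rfl
  · rw [sum_Icc_one_succ_eq hn, exponent_one, exponent_self hn, exponent_succ hn,
      sum_middle hj' fun i hi => exponent_middle hi]
    split_ifs at hdeg ⊢ <;> omega
  · rw [exponent_middle (mem_Icc.2 ⟨h2, by omega⟩), exponent_middle (mem_Icc.2 ⟨by omega, hi'⟩)]
    split_ifs <;> omega
  · rw [exponent_one]
    rcases eq_or_ne i 1 with rfl | hi1
    · rw [if_pos rfl]; omega
    · rw [if_neg hi1, exponent_middle (mem_Icc.2 ⟨by omega, by omega⟩)]
      split_ifs at hj ⊢ <;> omega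

lemma exists_params_of_mem (hn : 2 ≤ n) (hk1 : 1 ≤ k) {γ : ℕ → ℕ}
    (hγ : γ ∈ standardMonomials n s α k) : ∃ p ∈ params n s α k, exponent n s p = γ := by
  obtain ⟨hsupp, hdeg, hB, hC⟩ := hγ
  obtain ⟨j, hj, hmid⟩ := exists_middle_index hB
  have ha : γ 1 ≤ α := by simpa using hC 1 le_rfl hk1
  have hjk : γ 1 = α → j ≠ 0 → k < j := fun hα hj0 => by
    have hj2 : j ∈ Icc 2 (n - 1) := hj.resolve_left hj0
    by_contra hjk
    rw [mem_Icc] at hj2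
    refine hC j (by omega) (by omega) ?_
    rw [if_neg (by omega), hmid j (mem_Icc.2 hj2), if_pos ⟨hj0, rfl⟩]
    omega
  rw [sum_Icc_one_succ_eq hn, sum_middle hj hmid] at hdeg
  refine ⟨(γ 1, j, γ n), mem_params.2 ⟨ha, ?_, by omega⟩, funext fun i => ?_⟩
  · rw [mem_Icc] at hj
    split_ifs with h <;> omega
  by_cases h1 : i = 1
  · rw [h1, exponent_one]
  by_cases h2 : i = n
  · rw [h2, exponent_self hn]
  by_cases h3 : i = n + 1
  · rw [h3, exponent_succ hn]
    omega
  rw [exponent_of_ne h1 h2 h3]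
  by_cases hi : i ∈ Icc 2 (n - 1)
  · exact (hmid i hi).symm
  have hγi : γ i = 0 := by
    by_contra h
    have := hsupp i h
    rw [mem_Icc] at hi
    omega
  rw [hγi, if_neg]
  rintro ⟨hj0, rfl⟩
  exact hi (hj.resolve_left hj0)

lemma exponent_injOn (hn : 2 ≤ n) (hk1 : 1 ≤ k) :
    Set.InjOn (exponent n s) (params n s α k : Set (ℕ × ℕ × ℕ)) := by
  rintro ⟨a, j, b⟩ hp ⟨a', j', b'⟩ hp' h
  obtain rfl : a = a' := by simpa using congrFun h 1
  obtain rfl : b = b' := by simpa [exponent_self hn] using congrFun h n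
  obtain rfl : j = j' := by
    rcases middle_of_mem_params hk1 hp with rfl | hj <;>
      rcases middle_of_mem_params hk1 hp' with rfl | hj'
    · rfl
    · have := congrFun h j'
      simp [exponent_middle hj', show j' ≠ 0 by simp at hj'; omega] at this
    · have := congrFun h j
      simp [exponent_middle hj, show j ≠ 0 by simp at hj; omega] at this
    · have := congrFun h j
      simp [exponent_middle hj, show j ≠ 0 by simp at hj; omega] at this
      exact this.2
  rfl

lemma sum_insert_zero_Icc {lo : ℕ} (hlo : 1 ≤ lo) (hlon : lo ≤ n) (m : ℕ) :
    ∑ j ∈ insert 0 (Icc lo (n - 1)), (m - if j = 0 then 0 else 1) = m + (n - lo) * (m - 1) := by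
  rw [sum_insert (by simp; omega), sum_congr rfl fun j hj => by
    rw [if_neg (by simp at hj; omega)]]
  simp only [if_pos, Nat.sub_zero, sum_const, Nat.card_Icc, smul_eq_mul]
  rw [show n - 1 + 1 - lo = n - lo by omega]

lemma card_params (hn : 2 ≤ n) (hk : k ≤ n - 1) :
    #(params n s α k) = ∑ a ∈ range α, ((s + 1 - a) + (n - 2) * (s - a)) +
      ((s + 1 - α) + (n - (k + 1)) * (s - α)) := by
  simp only [params, card_biUnion_singleton_product, card_range]
  rw [sum_range_succ, if_pos rfl, sum_insert_zero_Icc (by omega) (by omega)]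
  refine congrArg₂ _ (sum_congr rfl fun a ha => ?_) ?_
  · rw [if_neg (by simp at ha; omega), sum_insert_zero_Icc (by omega) hn, Nat.sub_right_comm,
      Nat.add_sub_cancel]
  · rw [Nat.sub_right_comm, Nat.add_sub_cancel]

lemma card_params_eq (hn : 2 ≤ n) (hk : k ≤ n - 1) (hα : α ≤ s) :
    (#(params n s α k) : ℤ) =
      (n - 1) * (α * s - α.choose 2) + α + (n - k) * (s - α) + 1 := by
  have hterm : ∀ a ∈ range α,
      (((s + 1 - a) + (n - 2) * (s - a) : ℕ) : ℤ) = (n - 1) * (s - a) + 1 := fun a ha => by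
    have : a ≤ s := by simp at ha; omega
    push_cast [Nat.cast_sub this, Nat.cast_sub (show a ≤ s + 1 by omega), Nat.cast_sub hn]
    ring
  rw [card_params hn hk, Nat.cast_add, Nat.cast_sum, sum_congr rfl hterm, sum_add_distrib,
    ← mul_sum, sum_range_sub_eq, sum_const, card_range, nsmul_one]
  push_cast [Nat.cast_sub hα, Nat.cast_sub (show α ≤ s + 1 by omega),
    Nat.cast_sub (show k + 1 ≤ n by omega)]
  ring

lemma standardMonomials_eq_image (hn : 2 ≤ n) (hk1 : 1 ≤ k) (hk : k ≤ n - 1) :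
    standardMonomials n s α k = exponent n s '' params n s α k := by
  ext γ
  constructor
  · exact exists_params_of_mem hn hk1
  · rintro ⟨⟨a, j, b⟩, hp, rfl⟩
    exact exponent_mem hn hk1 hk hp

lemma ncard_standardMonomials (hn : 2 ≤ n) (hk1 : 1 ≤ k) (hk : k ≤ n - 1) (hα : α ≤ s) :
    ((standardMonomials n s α k).ncard : ℤ) =
      (n - 1) * (α * s - α.choose 2) + α + (n - k) * (s - α) + 1 := by
  rw [standardMonomials_eq_image hn hk1 hk, (exponent_injOn hn hk1).ncard_image,
    Set.ncard_coe_finset, card_params_eq hn hk hα]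

end StdMonomial

theorem stmt_5_general (n d m1 q r s : ℕ) (m : ℕ → ℕ)
    (hn : 2 ≤ n)
    (hm : ∀ i, 1 ≤ i → i ≤ n → m i = m1 + (i - 1) * d)
    (hdiv : m1 = q * (n - 1) + r) (hr1 : 1 ≤ r) (hr2 : r ≤ n - 1)
    (hs : q + d ≤ s) :
    (Set.ncard {γ : ℕ → ℕ |
        (∀ i, γ i ≠ 0 → 1 ≤ i ∧ i ≤ n + 1) ∧
        (∑ i ∈ Finset.Icc 1 (n + 1), γ i) = s ∧
        (∀ i j, 2 ≤ i → i ≤ j → j ≤ n - 1 →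
          ¬ (if i = j then 2 ≤ γ i else 1 ≤ γ i ∧ 1 ≤ γ j)) ∧
        (∀ i, 1 ≤ i → i ≤ n - r →
          ¬ (if i = 1 then q + d + 1 ≤ γ 1 else q + d ≤ γ 1 ∧ 1 ≤ γ i))} : ℤ) =
      (m n : ℤ) * s + (q + d : ℤ) * (2 - (n : ℤ) + ((n - r : ℕ) : ℤ))
        - (Nat.choose (q + d + 1) 2 : ℤ) - ((n : ℤ) - 2) * (Nat.choose (q + d) 2 : ℤ)
        + 1 := by
  change ((StdMonomial.standardMonomials n s (q + d) (n - r)).ncard : ℤ) = _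
  rw [StdMonomial.ncard_standardMonomials hn (by omega) (by omega) hs, hm n (by omega) le_rfl,
    hdiv, Nat.choose_succ_succ, Nat.choose_one_right]
  push_cast [Nat.cast_sub (show r ≤ n by omega), Nat.cast_sub (show 1 ≤ n by omega)]
  ring

/-- Hilbert function of the initial ideal in degrees s ≥ α:
the count of standard monomials of degree s equals
mₙ·s + α(2-n+k) - C(α+1,2) - (n-2)C(α,2) + 1. -/
theorem stmt_5 (n d m1 q r s : ℕ) (m : ℕ → ℕ)
    (hn : 2 ≤ n) (hd : 1 ≤ d) (hm1 : 1 ≤ m1)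
    (hgcd : Nat.gcd m1 d = 1)
    (hm : ∀ i, 1 ≤ i → i ≤ n → m i = m1 + (i - 1) * d)
    (hdiv : m1 = q * (n - 1) + r) (hr1 : 1 ≤ r) (hr2 : r ≤ n - 1)
    (hs : q + d ≤ s) :
    (Set.ncard {γ : ℕ → ℕ |
        (∀ i, γ i ≠ 0 → 1 ≤ i ∧ i ≤ n + 1) ∧
        (∑ i ∈ Finset.Icc 1 (n + 1), γ i) = s ∧
        (∀ i j, 2 ≤ i → i ≤ j → j ≤ n - 1 →
          ¬ (if i = j then 2 ≤ γ i else 1 ≤ γ i ∧ 1 ≤ γ j)) ∧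
        (∀ i, 1 ≤ i → i ≤ n - r →
          ¬ (if i = 1 then q + d + 1 ≤ γ 1 else q + d ≤ γ 1 ∧ 1 ≤ γ i))} : ℤ) =
      (m n : ℤ) * s + (q + d : ℤ) * (2 - (n : ℤ) + ((n - r : ℕ) : ℤ))
        - (Nat.choose (q + d + 1) 2 : ℤ) - ((n : ℤ) - 2) * (Nat.choose (q + d) 2 : ℤ)
        + 1 :=
  stmt_5_general n d m1 q r s m hn hm hdiv hr1 hr2 hs
end

section
/- Let n ≥ 2 and let m_1 < ... < m_n be an arithmetic sequence of positive integers with common difference d and gcd(m_1, d) = 1, with m_1 = q(n-1)+r, r ∈ {1,...,n-1}, α = q+d, k = n-r. Then the identity Σ_{s≥0} H(s) t^s = (1 + (n-1)(t + t^2 + ... + t^α) + (n-1-k)t^{α+1}) / (1-t)^2 holds as formal power series, where H(s) := C(s+2,2) + (n-2)C(s+1,2) for 0 ≤ s < α and H(s) := m_n s + α(2-n+k) - C(α+1,2) - (n-2)C(α,2) + 1 for s ≥ α. -/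
/-!
Multiplying by `1 - X` takes first differences of coefficients. The first difference of `H` is
`(n - 1) s + 1` for `s ≤ α` and the constant `m_n` beyond: at `s = α` the linear branch continues
the quadratic one precisely because `m_n = (n - 1) α + r` and `k = n - r`. A second difference
then leaves `1`, the value `n - 1` at `1, …, α`, and the jump `m_n - (n - 1) α - 1 = n - 1 - k`
at `α + 1`, which are the coefficients of the numerator.
-/

open PowerSeries

theorem PowerSeries.mk_mul_one_sub_X_eq {R : Type*} [Ring R] {f : ℕ → R} {φ : R⟦X⟧}
    (h0 : f 0 = coeff 0 φ) (hsucc : ∀ s, f (s + 1) - f s = coeff (s + 1) φ) :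
    mk f * (1 - X) = φ := by
  ext (_ | s)
  · simp [h0]
  · simp [mul_sub, coeff_succ_mul_X, hsucc]

theorem Nat.cast_choose_two_succ {R : Type*} [CommRing R] (s : ℕ) :
    ((s + 1).choose 2 : R) = (s.choose 2 : R) + s := by
  rw [Nat.choose_succ_succ', Nat.choose_one_right]; push_cast; ring

theorem Nat.two_mul_cast_choose_two_succ {R : Type*} [CommRing R] (s : ℕ) :
    2 * ((s + 1).choose 2 : R) = (s + 1) * s := by
  have h := Nat.add_one_mul_choose_eq s 1
  rw [Nat.choose_one_right] at h
  have key : 2 * (s + 1).choose 2 = (s + 1) * s := by rw [h]; ring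
  simpa using congrArg (Nat.cast : ℕ → R) key

section HilbertSeries

variable {R : Type*} [CommRing R] (n k M : R) (α : ℕ)

/-- `H` of the paper, with `M` standing for `m_n`. -/
def hilbertFn (s : ℕ) : R :=
  if s < α then ((s + 2).choose 2 : R) + (n - 2) * (s + 1).choose 2
  else M * s + α * (2 - n + k) - (α + 1).choose 2 - (n - 2) * α.choose 2 + 1

def hilbertFnDiff (s : ℕ) : R :=
  if s ≤ α then (n - 1) * s + 1 else M

noncomputable def hilbertNumerator : R⟦X⟧ :=
  1 + C (n - 1) * ∑ i ∈ Finset.Icc 1 α, X ^ i + C (n - 1 - k) * X ^ (α + 1)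

theorem hilbertFn_zero : hilbertFn n k M α 0 = 1 := by
  rcases Nat.eq_zero_or_pos α with rfl | hα
  · simp [hilbertFn]
  · simp [hilbertFn, hα]

variable {n k M α}

theorem hilbertFn_succ_sub (hM : M = (n - 1) * α + n - k) (s : ℕ) :
    hilbertFn n k M α (s + 1) - hilbertFn n k M α s = hilbertFnDiff n M α (s + 1) := by
  unfold hilbertFn hilbertFnDiff
  rcases lt_trichotomy (s + 1) α with hs | rfl | hs
  · rw [if_pos hs, if_pos (by omega), if_pos hs.le, Nat.cast_choose_two_succ (s + 2),
      Nat.cast_choose_two_succ (s + 1)]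
    push_cast; ring
  · rw [if_neg (lt_irrefl _), if_pos (by omega), if_pos le_rfl, hM,
      Nat.cast_choose_two_succ (s + 1)]
    push_cast
    linear_combination (1 - n) * Nat.two_mul_cast_choose_two_succ (R := R) s
  · rw [if_neg (by omega), if_neg (by omega), if_neg (by omega)]
    push_cast; ring

theorem coeff_hilbertNumerator_zero : coeff 0 (hilbertNumerator n k α) = 1 := by
  simp only [hilbertNumerator, map_add, coeff_C_mul, map_sum, coeff_X_pow, coeff_one,
    Finset.sum_ite_eq, Finset.mem_Icc]
  simp

theorem hilbertFnDiff_succ_sub (hM : M = (n - 1) * α + n - k) (s : ℕ) :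
    hilbertFnDiff n M α (s + 1) - hilbertFnDiff n M α s =
      coeff (s + 1) (hilbertNumerator n k α) := by
  simp only [hilbertNumerator, hilbertFnDiff, map_add, coeff_C_mul, map_sum, coeff_X_pow,
    coeff_one, Finset.sum_ite_eq, Finset.mem_Icc]
  rcases lt_trichotomy s α with hs | rfl | hs
  · rw [if_pos (by omega), if_pos hs.le, if_neg (by omega), if_pos (by omega), if_neg (by omega)]
    push_cast; ring
  · rw [if_neg (by omega), if_pos le_rfl, if_neg (by omega), if_neg (by omega), if_pos rfl, hM]
    ring
  · rw [if_neg (by omega), if_neg (by omega), if_neg (by omega), if_neg (by omega),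
      if_neg (by omega)]
    ring

theorem mk_hilbertFn_mul_one_sub_X_sq (hM : M = (n - 1) * α + n - k) :
    mk (hilbertFn n k M α) * (1 - X) ^ 2 = hilbertNumerator n k α := by
  rw [sq, ← mul_assoc, mk_mul_one_sub_X_eq (φ := mk (hilbertFnDiff n M α))]
  · refine mk_mul_one_sub_X_eq ?_ (hilbertFnDiff_succ_sub hM)
    simp [hilbertFnDiff, coeff_hilbertNumerator_zero]
  · simp [hilbertFn_zero, hilbertFnDiff]
  · simpa using hilbertFn_succ_sub hM

end HilbertSeries

theorem stmt_6_general (n d m1 q r : ℕ) (m : ℕ → ℕ)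
    (hn : 2 ≤ n)
    (hm : ∀ i, 1 ≤ i → i ≤ n → m i = m1 + (i - 1) * d)
    (hdiv : m1 = q * (n - 1) + r) (hr2 : r ≤ n - 1) :
    (PowerSeries.mk (fun s : ℕ =>
        if s < q + d then
          (Nat.choose (s + 2) 2 : ℤ) + ((n : ℤ) - 2) * (Nat.choose (s + 1) 2 : ℤ)
        else
          (m n : ℤ) * s + (q + d : ℤ) * (2 - (n : ℤ) + ((n - r : ℕ) : ℤ))
            - (Nat.choose (q + d + 1) 2 : ℤ)
            - ((n : ℤ) - 2) * (Nat.choose (q + d) 2 : ℤ) + 1))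
      * (1 - PowerSeries.X) ^ 2 =
    1 + PowerSeries.C (R := ℤ) ((n : ℤ) - 1) * (∑ i ∈ Finset.Icc 1 (q + d), PowerSeries.X ^ i)
      + PowerSeries.C (R := ℤ) ((n : ℤ) - 1 - ((n - r : ℕ) : ℤ)) * PowerSeries.X ^ (q + d + 1) := by
  have hM : (m n : ℤ) = ((n : ℤ) - 1) * ((q + d : ℕ) : ℤ) + n - ((n - r : ℕ) : ℤ) := by
    rw [hm n (by omega) le_rfl, hdiv]
    push_cast [Nat.cast_sub (by omega : 1 ≤ n), Nat.cast_sub (by omega : r ≤ n)]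
    ring
  exact mk_hilbertFn_mul_one_sub_X_sq hM

/-- Hilbert series identity: Σ H(s) tˢ · (1-t)² = 1 + (n-1)(t+⋯+t^α) + (n-1-k)t^{α+1}
as formal power series over ℤ. -/
theorem stmt_6 (n d m1 q r : ℕ) (m : ℕ → ℕ)
    (hn : 2 ≤ n) (hd : 1 ≤ d) (hm1 : 1 ≤ m1)
    (hgcd : Nat.gcd m1 d = 1)
    (hm : ∀ i, 1 ≤ i → i ≤ n → m i = m1 + (i - 1) * d)
    (hdiv : m1 = q * (n - 1) + r) (hr1 : 1 ≤ r) (hr2 : r ≤ n - 1) :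
    (PowerSeries.mk (fun s : ℕ =>
        if s < q + d then
          (Nat.choose (s + 2) 2 : ℤ) + ((n : ℤ) - 2) * (Nat.choose (s + 1) 2 : ℤ)
        else
          (m n : ℤ) * s + (q + d : ℤ) * (2 - (n : ℤ) + ((n - r : ℕ) : ℤ))
            - (Nat.choose (q + d + 1) 2 : ℤ)
            - ((n : ℤ) - 2) * (Nat.choose (q + d) 2 : ℤ) + 1))
      * (1 - PowerSeries.X) ^ 2 =
    1 + PowerSeries.C (R := ℤ) ((n : ℤ) - 1) * (∑ i ∈ Finset.Icc 1 (q + d), PowerSeries.X ^ i)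
      + PowerSeries.C (R := ℤ) ((n : ℤ) - 1 - ((n - r : ℕ) : ℤ)) * PowerSeries.X ^ (q + d + 1) :=
  stmt_6_general n d m1 q r m hn hm hdiv hr2
end

section
/- Let n ≥ 3 and let m_1 < ... < m_n be a generalized arithmetic sequence with m_i = h·m_1 + (i-1)d for i ≥ 2, h > 1, h | d, gcd(m_1, d) = 1. Write m_1 = p(n-1) + s with s ∈ {1,...,n-1} and set δ := ph + d + h. If δ·m_1 = m_j + p'·m_n for some j ∈ {2,...,n} and p' ∈ ℕ, then j = s+1 and p' = p. -/
/-- Uniqueness: if δ·m₁ = mⱼ + p'·mₙ with 2 ≤ j ≤ n, then j = s+1 and p' = p. -/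
theorem stmt_8 (n h d m1 p s j p' : ℕ) (m : ℕ → ℕ)
    (hn : 3 ≤ n) (hh : 2 ≤ h) (hd : 1 ≤ d) (hm1 : 1 ≤ m1)
    (hdvd : h ∣ d) (hgcd : Nat.gcd m1 d = 1)
    (hm0 : m 1 = m1)
    (hm : ∀ i, 2 ≤ i → i ≤ n → m i = h * m1 + (i - 1) * d)
    (hdiv : m1 = p * (n - 1) + s) (hs1 : 1 ≤ s) (hs2 : s ≤ n - 1)
    (hj1 : 2 ≤ j) (hj2 : j ≤ n)
    (heq : (p * h + d + h) * m1 = m j + p' * m n) :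
    j = s + 1 ∧ p' = p := by
  obtain ⟨j0, rfl⟩ := Nat.exists_eq_add_of_le hj1
  obtain ⟨n0, rfl⟩ := Nat.exists_eq_add_of_le hn
  have hjn : m (2 + j0) = h * m1 + (j0 + 1) * d := by
    rw [hm (2 + j0) (by omega) hj2]; congr 2; omega
  have hnn : m (3 + n0) = h * m1 + (n0 + 2) * d := by
    rw [hm (3 + n0) (by omega) le_rfl]; congr 2; omega
  rw [hjn, hnn] at heq
  have hsub : 3 + n0 - 1 = n0 + 2 := by omega
  rw [hsub] at hdiv hs2
  have hj2' : j0 ≤ n0 + 1 := by omega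
  -- pass to integers
  have heqZ : ((p : ℤ) * h + d + h) * m1
      = (h * m1 + (j0 + 1) * d) + p' * (h * m1 + (n0 + 2) * d) := by
    exact_mod_cast heq
  have hdZ : (m1 : ℤ) = p * (n0 + 2) + s := by exact_mod_cast hdiv
  have key : ((p : ℤ) - p') * ((h : ℤ) * m1 + (n0 + 2) * d) = ((j0 : ℤ) + 1 - s) * d := by
    linear_combination heqZ - (d : ℤ) * hdZ
  have hMZ : ((h : ℤ) * m1 + (n0 + 2) * d) ≥ ((n0 : ℤ) + 2) * d + 2 := by
    have h2 : (2 : ℤ) ≤ h := by exact_mod_cast hh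
    have h1 : (1 : ℤ) ≤ m1 := by exact_mod_cast hm1
    nlinarith
  have hdZ' : (1 : ℤ) ≤ d := by exact_mod_cast hd
  have hsZ : (1 : ℤ) ≤ s := by exact_mod_cast hs1
  have hsZ' : (s : ℤ) ≤ n0 + 2 := by exact_mod_cast hs2
  have hjZ : (j0 : ℤ) ≤ n0 + 1 := by exact_mod_cast hj2'
  set M : ℤ := (h : ℤ) * m1 + (n0 + 2) * d with hM
  have hnd0 : (0 : ℤ) ≤ ((n0 : ℤ) + 2) * d := by positivity
  have hrel : ((n0 : ℤ) + 2) * d = ((n0 : ℤ) + 1) * d + d := by ring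
  have hMpos : 0 < M := by linarith
  have hub : ((j0 : ℤ) + 1 - s) * d ≤ ((n0 : ℤ) + 1) * d :=
    mul_le_mul_of_nonneg_right (by linarith) (by linarith)
  have hlb : (-((n0 : ℤ) + 1)) * d ≤ ((j0 : ℤ) + 1 - s) * d :=
    mul_le_mul_of_nonneg_right (by linarith) (by linarith)
  have hlb' : -(((n0 : ℤ) + 1) * d) ≤ ((j0 : ℤ) + 1 - s) * d := by
    rw [← neg_mul]; exact hlb
  have hpp : (p : ℤ) = p' := by
    rcases lt_trichotomy (p : ℤ) (p' : ℤ) with hlt | heqp | hgt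
    · exfalso
      have hA : (p : ℤ) - p' ≤ -1 := by omega
      have h1 : ((p : ℤ) - p') * M ≤ (-1 : ℤ) * M :=
        mul_le_mul_of_nonneg_right hA hMpos.le
      have h2 : (-1 : ℤ) * M = -M := by ring
      linarith
    · exact heqp
    · exfalso
      have hA : (1 : ℤ) ≤ (p : ℤ) - p' := by omega
      have h1 : (1 : ℤ) * M ≤ ((p : ℤ) - p') * M :=
        mul_le_mul_of_nonneg_right hA hMpos.le
      have h2 : (1 : ℤ) * M = M := by ring
      linarith
  rw [hpp, sub_self, zero_mul] at key
  have hB : (j0 : ℤ) + 1 - s = 0 := by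
    rcases mul_eq_zero.mp key.symm with k | k
    · exact k
    · omega
  have hj0 : j0 + 1 = s := by omega
  constructor <;> omega
end

section
/- Let n ≥ 3, let m_1 < ... < m_n be a generalized arithmetic sequence with m_i = h·m_1 + (i-1)d for i ≥ 2, h > 1, h | d, gcd(m_1, d) = 1, and set δ := ⌊(m_1-1)/(n-1)⌋·h + d + h and δ' := δ/h. For each j ∈ {0,...,δ'-1}, let β_j := min { b ∈ ℤ⁺ : j·h·m_1 + b·m_2 ∈ ℕm_3 + ... + ℕm_n }. Then for each such j there exist unique σ_j ∈ {3,...,n} and λ_j ∈ ℕ such that j·h·m_1 + β_j·m_2 = m_{σ_j} + λ_j·m_n. -/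
/-!
Write `d = h e`, so that `mᵢ = h (m₁ + (i - 1) e)` for `i ≥ 2`. After cancelling `h`, a sum
`∑ δᵢ mᵢ` over `3 ≤ i ≤ n` becomes `c m₁ + S e` with `c = ∑ δᵢ` and `S = ∑ δᵢ (i - 1)`, and these
pairs are exactly those with `2c ≤ S ≤ c (n - 1)`.

Let `p = ⌊(m₁ - 1)/(n - 1)⌋`, so `j ≤ p + e`. Then `j m₁ = c m₁ + S e` forces `c = 0`: since `m₁`
and `e` are coprime, `m₁ ∣ S`, so `c > p`, and `(j - c) m₁ = S e ≥ m₁ e` gives `j ≥ c + e > p + e`.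
Being of the form `m_σ + λ mₙ` means `S ≥ (c - 1)(n - 1) + 2`. If the pair `(c, S)` for `βⱼ` had a
smaller `S`, we could remove one copy of `m₂` from both sides. For `βⱼ > 1` this contradicts
minimality, and for `βⱼ = 1` it contradicts the previous fact. Uniqueness holds because
`m_σ + λ mₙ` is strictly increasing in `(λ, σ)` ordered lexicographically.
-/

open Finset

theorem exists_sum_Icc_eq_of_two_mul_le (n c S : ℕ) (hS : 2 * c ≤ S) (hSn : S ≤ c * (n - 1)) :
    ∃ δ : ℕ → ℕ, ∑ i ∈ Icc 3 n, δ i = c ∧ ∑ i ∈ Icc 3 n, δ i * (i - 1) = S := by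
  induction c generalizing S with
  | zero => exact ⟨0, by simp, by simp; omega⟩
  | succ c ih =>
    have hn : 3 ≤ n := by
      by_contra! hn
      have : (c + 1) * (n - 1) ≤ (c + 1) * 1 := by gcongr; omega
      omega
    rw [add_one_mul] at hSn
    have hmul : 2 * c ≤ c * (n - 1) := by rw [mul_comm]; gcongr; omega
    -- the largest weight `i - 1` that leaves an admissible pair `(c, S - w)`
    set w := min (n - 1) (S - 2 * c)
    obtain ⟨δ, hcount, hweight⟩ := ih (S - w) (by omega) (by omega)
    have hmem : w + 1 ∈ Icc 3 n := mem_Icc.mpr (by omega)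
    have sum_add_single (f : ℕ → ℕ) :
        ∑ i ∈ Icc 3 n, (δ i + Pi.single (M := fun _ => ℕ) (w + 1) 1 i) * f i =
          ∑ i ∈ Icc 3 n, δ i * f i + f (w + 1) := by
      simp [add_mul, sum_add_distrib, Pi.single_apply, hmem]
    refine ⟨δ + Pi.single (w + 1) 1, ?_, ?_⟩
    · simpa [hcount] using sum_add_single 1
    · rw [Pi.add_def, sum_add_single, hweight]
      omega

theorem sum_mul_add_sub_one_mul (s : Finset ℕ) (δ : ℕ → ℕ) (a e : ℕ) :
    ∑ i ∈ s, δ i * (a + (i - 1) * e) =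
      (∑ i ∈ s, δ i) * a + (∑ i ∈ s, δ i * (i - 1)) * e := by
  simp only [mul_add, sum_add_distrib, sum_mul, mul_assoc]

/-- Membership in `ℕa₃ + ⋯ + ℕaₙ` for `aᵢ = a + (i - 1) e`. -/
theorem exists_eq_sum_Icc_iff (n a e x : ℕ) :
    (∃ δ : ℕ → ℕ, x = ∑ i ∈ Icc 3 n, δ i * (a + (i - 1) * e)) ↔
      ∃ c S, 2 * c ≤ S ∧ S ≤ c * (n - 1) ∧ x = c * a + S * e := by
  simp only [sum_mul_add_sub_one_mul]
  constructor
  · rintro ⟨δ, rfl⟩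
    refine ⟨_, _, ?_, ?_, rfl⟩
    · rw [mul_sum]
      exact sum_le_sum fun i hi => by rw [mul_comm]; gcongr; grind
    · rw [sum_mul]
      exact sum_le_sum fun i hi => by gcongr; grind
  · rintro ⟨c, S, hS, hSn, rfl⟩
    obtain ⟨δ, rfl, rfl⟩ := exists_sum_Icc_eq_of_two_mul_le n c S hS hSn
    exact ⟨δ, rfl⟩

theorem eq_zero_of_mul_eq_mul_add_mul {n a e p j c S : ℕ} (hp : p * (n - 1) < a)
    (hj : j ≤ p + e) (hae : a.Coprime e) (hS : 2 * c ≤ S) (hSn : S ≤ c * (n - 1))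
    (h : j * a = c * a + S * e) : c = 0 := by
  by_contra hc
  have hcj : c ≤ j := le_of_mul_le_mul_right (h ▸ Nat.le_add_right _ _) (by omega)
  have hjc : (j - c) * a = S * e := by rw [Nat.sub_mul]; omega
  have haS : a ≤ S :=
    Nat.le_of_dvd (by omega) (hae.dvd_of_dvd_mul_right ⟨j - c, by rw [← hjc, mul_comm]⟩)
  have hpc : p < c := by
    by_contra! hcp
    have : c * (n - 1) ≤ p * (n - 1) := by gcongr
    omega
  have hej : e ≤ j - c := by
    by_contra! hjc'
    have : (j - c + 1) * a ≤ e * a := by gcongr; omega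
    have : e * a ≤ S * e := by rw [mul_comm]; gcongr
    rw [add_one_mul] at *
    omega
  omega

theorem exists_eq_succ_mul_of_isLeast {n a e p j β : ℕ} (hp : p * (n - 1) < a)
    (hj : j ≤ p + e) (hae : a.Coprime e)
    (hβ : IsLeast {b | 0 < b ∧ ∃ c S, 2 * c ≤ S ∧ S ≤ c * (n - 1) ∧
      (j + b) * a + b * e = c * a + S * e} β) :
    ∃ σ l, 3 ≤ σ ∧ σ ≤ n ∧
      (j + β) * a + β * e = (l + 1) * a + (σ - 1 + l * (n - 1)) * e := by
  obtain ⟨⟨hβ0, c, S, hS, hSn, hrepr⟩, hmin⟩ := hβ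
  have hc : c ≠ 0 := by
    rintro rfl
    obtain rfl : S = 0 := by simpa using hSn
    rw [zero_mul, zero_mul, add_zero] at hrepr
    have : 0 < (j + β) * a := Nat.mul_pos (by omega) (by omega)
    omega
  obtain ⟨l, rfl⟩ : ∃ l, c = l + 1 := ⟨c - 1, by omega⟩
  rw [add_one_mul] at hSn
  have hS_ge : l * (n - 1) + 2 ≤ S := by
    by_contra! hlt
    obtain ⟨b, rfl⟩ : ∃ b, β = b + 1 := ⟨β - 1, by omega⟩
    obtain ⟨T, rfl⟩ : ∃ T, S = T + 1 := ⟨S - 1, by omega⟩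
    -- remove one copy of `a₂ = a + e` from both sides
    have hrepr' : (j + b) * a + b * e = l * a + T * e := by linarith
    have hT : 2 * l ≤ T := by omega
    have hTn : T ≤ l * (n - 1) := by omega
    rcases Nat.eq_zero_or_pos b with rfl | hb
    · obtain rfl := eq_zero_of_mul_eq_mul_add_mul hp hj hae hT hTn (by simpa using hrepr')
      omega
    · have := hmin ⟨hb, l, T, hT, hTn, hrepr'⟩
      omega
  exact ⟨S - l * (n - 1) + 1, l, by omega, by omega, by rw [hrepr]; congr; omega⟩

theorem eq_and_eq_of_add_mul_eq {m : ℕ → ℕ} {n : ℕ} (hm : StrictMonoOn m (Set.Icc 3 n))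
    (hm3 : 0 < m 3) {σ σ' l l' : ℕ} (hσ : σ ∈ Set.Icc 3 n) (hσ' : σ' ∈ Set.Icc 3 n)
    (h : m σ + l * m n = m σ' + l' * m n) : σ = σ' ∧ l = l' := by
  have hn : n ∈ Set.Icc 3 n := ⟨hσ.1.trans hσ.2, le_rfl⟩
  have add_mul_lt {σ σ' l l'} (hσ : σ ∈ Set.Icc 3 n) (hσ' : σ' ∈ Set.Icc 3 n) (hl : l < l') :
      m σ + l * m n < m σ' + l' * m n :=
    calc m σ + l * m n ≤ (l + 1) * m n := by
          rw [add_one_mul, add_comm]; gcongr; exact hm.monotoneOn hσ hn hσ.2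
      _ ≤ l' * m n := by gcongr; omega
      _ < m σ' + l' * m n := by
        have := hm.monotoneOn ⟨le_rfl, hσ'.1.trans hσ'.2⟩ hσ' hσ'.1
        omega
  obtain rfl : l = l' := by
    rcases lt_trichotomy l l' with hl | hl | hl
    · exact absurd h (add_mul_lt hσ hσ' hl).ne
    · exact hl
    · exact absurd h (add_mul_lt hσ' hσ hl).ne'
  exact ⟨hm.injOn hσ hσ' (by omega), rfl⟩

theorem stmt_10_general (n h d m1 : ℕ) (m : ℕ → ℕ)
    (hn : 3 ≤ n) (hh : 2 ≤ h) (hd : 1 ≤ d) (hm1 : 1 ≤ m1)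
    (hdvd : h ∣ d) (hgcd : Nat.gcd m1 d = 1)
    (hm : ∀ i, 2 ≤ i → i ≤ n → m i = h * m1 + (i - 1) * d) :
    ∀ j, j < (((m1 - 1) / (n - 1)) * h + d + h) / h →
      ∀ βj : ℕ,
        IsLeast {b : ℕ | 0 < b ∧
            ∃ δ : ℕ → ℕ, j * h * m1 + b * m 2 = ∑ i ∈ Finset.Icc 3 n, δ i * m i} βj →
        ∃! x : ℕ × ℕ, 3 ≤ x.1 ∧ x.1 ≤ n ∧
          j * h * m1 + βj * m 2 = m x.1 + x.2 * m n := by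
  intro j hj β hβ
  have hmono : StrictMonoOn m (Set.Icc 3 n) := fun i hi i' hi' hlt => by
    rw [hm i (by grind) hi.2, hm i' (by grind) hi'.2]
    gcongr
    exact le_trans (by norm_num) hi.1
  have hm3 : 0 < m 3 := by rw [hm 3 (by omega) hn]; positivity
  obtain ⟨e, rfl⟩ := hdvd
  have hp : (m1 - 1) / (n - 1) * (n - 1) < m1 := by
    have := Nat.div_mul_le_self (m1 - 1) (n - 1); omega
  generalize (m1 - 1) / (n - 1) = p at hp hj
  have hj : j ≤ p + e := by
    rw [show p * h + h * e + h = h * (p + e + 1) by ring,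
      Nat.mul_div_cancel_left _ (by omega)] at hj
    omega
  have hm' : ∀ i, 2 ≤ i → i ≤ n → m i = h * (m1 + (i - 1) * e) := fun i hi hin => by
    rw [hm i hi hin]; ring
  have hsum (δ : ℕ → ℕ) :
      ∑ i ∈ Icc 3 n, δ i * m i = h * ∑ i ∈ Icc 3 n, δ i * (m1 + (i - 1) * e) := by
    rw [mul_sum]; exact sum_congr rfl fun i hi => by rw [hm' i (by grind) (by grind)]; ring
  have hlhs (b : ℕ) : j * h * m1 + b * m 2 = h * ((j + b) * m1 + b * e) := by
    rw [hm' 2 le_rfl (by omega)]; ring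
  simp only [hlhs, hsum, Nat.mul_left_cancel_iff (show 0 < h by omega),
    exists_eq_sum_Icc_iff] at hβ
  obtain ⟨σ, l, hσ, hσn, hrepr⟩ :=
    exists_eq_succ_mul_of_isLeast hp hj (Nat.Coprime.coprime_mul_left_right hgcd) hβ
  have hexists : j * h * m1 + β * m 2 = m σ + l * m n := by
    rw [hlhs, hrepr, hm' σ (by omega) hσn, hm' n (by omega) le_rfl]
    ring
  refine ⟨(σ, l), ⟨hσ, hσn, hexists⟩, fun ⟨σ', l'⟩ ⟨hσ', hσn', heq⟩ => ?_⟩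
  obtain ⟨rfl, rfl⟩ :=
    eq_and_eq_of_add_mul_eq hmono hm3 ⟨hσ', hσn'⟩ ⟨hσ, hσn⟩ (heq.symm.trans hexists)
  rfl

/-- For each j < δ/h and βⱼ the least positive b with jhm₁ + b·m₂ ∈ ℕm₃+⋯+ℕmₙ,
there exist unique σⱼ ∈ {3,…,n} and λⱼ ∈ ℕ with jhm₁ + βⱼm₂ = m_{σⱼ} + λⱼmₙ. -/
theorem stmt_10 (n h d m1 : ℕ) (m : ℕ → ℕ)
    (hn : 3 ≤ n) (hh : 2 ≤ h) (hd : 1 ≤ d) (hm1 : 1 ≤ m1)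
    (hdvd : h ∣ d) (hgcd : Nat.gcd m1 d = 1)
    (hm0 : m 1 = m1)
    (hm : ∀ i, 2 ≤ i → i ≤ n → m i = h * m1 + (i - 1) * d) :
    ∀ j, j < (((m1 - 1) / (n - 1)) * h + d + h) / h →
      ∀ βj : ℕ,
        IsLeast {b : ℕ | 0 < b ∧
            ∃ δ : ℕ → ℕ, j * h * m1 + b * m 2 = ∑ i ∈ Finset.Icc 3 n, δ i * m i} βj →
        ∃! x : ℕ × ℕ, 3 ≤ x.1 ∧ x.1 ≤ n ∧
          j * h * m1 + βj * m 2 = m x.1 + x.2 * m n :=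
  stmt_10_general n h d m1 m hn hh hd hm1 hdvd hgcd hm
end

section
/- Let n ≥ 3, let m_1 < ... < m_n be a generalized arithmetic sequence with m_i = h·m_1 + (i-1)d for i ≥ 2, h > 1, h | d, gcd(m_1, d) = 1. Set δ := ph + d + h where m_1 = p(n-1)+s, s ∈ {1,...,n-1}, δ' := δ/h, and for j ∈ {0,...,δ'-1} let β_j, σ_j, λ_j be defined by β_j = min{b ∈ ℤ⁺ : jhm_1 + b m_2 ∈ ℕm_3 + ... + ℕm_n} and jhm_1 + β_j m_2 = m_{σ_j} + λ_j m_n, with the conventions σ_{δ'} := s+1, λ_{δ'} := p, β_{δ'} := 0. Then for all j ∈ {1,...,δ'}: if σ_j ≠ n then σ_{j-1} = σ_j + 1, λ_{j-1} = λ_j, β_{j-1} = β_j + 1; and if σ_j = n then σ_{j-1} = 3, λ_{j-1} = λ_j + 1, β_{j-1} = β_j + 2. -/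
/-!
Write `d = h e`. A sum in `ℕ m₃ + ⋯ + ℕ mₙ` equals `A (h m₁) + B d` with `2A ≤ B ≤ (n - 1) A`, so
after cancelling `h` an identity `j h m₁ + b m₂ = ∑ δᵢ mᵢ` reads `(j + b - A) m₁ = (B - b) e`.
As `gcd(m₁, e) = 1`, `B - b = k m₁` and `j + b - A = k e` for some `k`, and `2A ≤ B` forces
`k ≥ 1`; with `B ≤ (n - 1) A` this gives `m₁ + (n - 1)(e - j) ≤ (n - 2) b`.

Going down from `j = δ'`, the representation `j h m₁ + βⱼ m₂ = m_{σⱼ} + λⱼ mₙ` has `k = 1`, and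
then the bound reads `(n - 2) βⱼ + σⱼ ≤ (n - 2) βⱼ₋₁ + 1`. The identity `m₂ + mₐ = mₐ₊₁ + h m₁`
(for `a = 2`: `2 m₂ = m₃ + h m₁`) trades one `h m₁` for one or two more `m₂`, producing a
representation at `j - 1` that attains this bound, so it realises `βⱼ₋₁`; since `0 < m_σ ≤ mₙ`,
the form `m_σ + λ mₙ` then determines `σⱼ₋₁` and `λⱼ₋₁`.
-/

open Finset

theorem Nat.eq_and_eq_of_add_mul_eq {u v N x y : ℕ} (hu : 0 < u) (hv : 0 < v) (huN : u ≤ N)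
    (hvN : v ≤ N) (h : u + x * N = v + y * N) : u = v ∧ x = y := by
  rcases lt_trichotomy x y with hxy | rfl | hxy
  · nlinarith
  · omega
  · nlinarith

theorem exists_sum_eq_add_mul (f : ℕ → ℕ) {s : Finset ℕ} {a c : ℕ} (ha : a ∈ s) (hc : c ∈ s)
    (l : ℕ) : ∃ δ : ℕ → ℕ, f a + l * f c = ∑ i ∈ s, δ i * f i :=
  ⟨fun i => (if i = a then 1 else 0) + (if i = c then l else 0), by
    simp [add_mul, ite_mul, sum_add_distrib, ha, hc]⟩

theorem Int.coeff_lower_bound_of_isCoprime {m₁ e J b A B N : ℤ} (hcop : IsCoprime m₁ e)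
    (hm₁ : 0 < m₁) (he : 0 ≤ e) (hJ : 0 ≤ J) (hb : 0 < b) (hN : 0 ≤ N) (hAB : 2 * A ≤ B)
    (hBA : B ≤ N * A) (htrade : (J + b - A) * m₁ = (B - b) * e) :
    m₁ + N * (e - J) ≤ (N - 1) * b := by
  obtain ⟨k, hBk⟩ := hcop.dvd_of_dvd_mul_right (Dvd.intro_left _ htrade)
  have hke : J + b - A = k * e := by
    refine mul_right_cancel₀ hm₁.ne' ?_
    rw [htrade, hBk]; ring
  have hk : 1 ≤ k := by
    by_contra! hk0
    nlinarith
  have hNe : 0 ≤ N * e * (k - 1) := by have := mul_nonneg hN he; nlinarith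
  nlinarith

namespace GenArithSeq

def admissibleCoeffs (n : ℕ) (m : ℕ → ℕ) (c : ℕ) : Set ℕ :=
  {b | 0 < b ∧ ∃ δ : ℕ → ℕ, c + b * m 2 = ∑ i ∈ Icc 3 n, δ i * m i}

/-- `k = 1` for the representation `j h m₁ + b m₂ = m_σ + l mₙ`: comparing coefficients of `h m₁`
and of `d`, its two sides differ by exactly one exchange of `e · (h m₁)` for `m₁ · d`. -/
def Balanced (n e m₁ j b σ l : ℕ) : Prop :=
  j + b = e + l + 1 ∧ σ + l * (n - 1) = b + m₁ + 1

variable {n h d e m₁ : ℕ} {m : ℕ → ℕ}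

theorem apply_two_add_apply (hm : ∀ i, 2 ≤ i → i ≤ n → m i = h * m₁ + (i - 1) * d) {a : ℕ}
    (ha : 2 ≤ a) (han : a < n) : m 2 + m a = m (a + 1) + h * m₁ := by
  rw [hm 2 le_rfl (by omega), hm a ha han.le, hm (a + 1) (by omega) han, Nat.add_sub_cancel]
  obtain ⟨t, rfl⟩ : ∃ t, a = t + 1 := ⟨a - 1, by omega⟩
  rw [Nat.add_sub_cancel]
  ring

theorem eq_and_eq_of_add_mul_eq (hd : 0 < d)
    (hm : ∀ i, 2 ≤ i → i ≤ n → m i = h * m₁ + (i - 1) * d)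
    {a c x y : ℕ} (ha : 2 ≤ a ∧ a ≤ n) (hc : 2 ≤ c ∧ c ≤ n)
    (heq : m a + x * m n = m c + y * m n) : a = c ∧ x = y := by
  have hpos : ∀ i, 2 ≤ i → i ≤ n → 0 < m i := fun i hi hin => by
    rw [hm i hi hin]; exact Nat.add_pos_right _ (Nat.mul_pos (by omega) hd)
  have hle : ∀ i, 2 ≤ i → i ≤ n → m i ≤ m n := fun i hi hin => by
    rw [hm i hi hin, hm n (by omega) le_rfl]; gcongr
  obtain ⟨hac, hxy⟩ := Nat.eq_and_eq_of_add_mul_eq (hpos a ha.1 ha.2) (hpos c hc.1 hc.2)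
    (hle a ha.1 ha.2) (hle c hc.1 hc.2) heq
  rw [hm a ha.1 ha.2, hm c hc.1 hc.2, add_right_inj] at hac
  exact ⟨by have := Nat.eq_of_mul_eq_mul_right hd hac; omega, hxy⟩

theorem exists_sum_Icc_eq (hm : ∀ i, 2 ≤ i → i ≤ n → m i = h * m₁ + (i - 1) * d) (δ : ℕ → ℕ) :
    ∃ A B, 2 * A ≤ B ∧ B ≤ (n - 1) * A ∧ ∑ i ∈ Icc 3 n, δ i * m i = A * (h * m₁) + B * d := by
  refine ⟨∑ i ∈ Icc 3 n, δ i, ∑ i ∈ Icc 3 n, δ i * (i - 1), ?_, ?_, ?_⟩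
  · rw [mul_sum]
    refine sum_le_sum fun i hi => ?_
    rw [mul_comm]; gcongr; grind
  · rw [mul_sum]
    refine sum_le_sum fun i hi => ?_
    rw [mul_comm]; gcongr; grind
  · rw [sum_mul, sum_mul, ← sum_add_distrib]
    refine sum_congr rfl fun i hi => ?_
    rw [hm i (by grind) (mem_Icc.1 hi).2]
    ring

theorem coeff_lower_bound (hn : 2 ≤ n) (hm : ∀ i, 2 ≤ i → i ≤ n → m i = h * m₁ + (i - 1) * d)
    (hh : 0 < h) (he : d = h * e) (hcop : m₁.Coprime e) (hm₁ : 0 < m₁) {J b : ℕ} (hb : 0 < b)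
    {δ : ℕ → ℕ} (hrep : J * h * m₁ + b * m 2 = ∑ i ∈ Icc 3 n, δ i * m i) :
    (m₁ : ℤ) + (n - 1) * (e - J) ≤ (n - 2) * b := by
  obtain ⟨A, B, hAB, hBA, hsum⟩ := exists_sum_Icc_eq hm δ
  have hm2 : m 2 = h * m₁ + d := by simpa using hm 2 le_rfl hn
  rw [hsum, hm2, he] at hrep
  have hrepZ : (J * h * m₁ + b * (h * m₁ + h * e) : ℤ) = A * (h * m₁) + B * (h * e) := by
    exact_mod_cast hrep
  have htrade : (J + b - A : ℤ) * m₁ = (B - b) * e :=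
    mul_left_cancel₀ (show (h : ℤ) ≠ 0 by positivity) (by linear_combination hrepZ)
  zify [show 1 ≤ n by omega] at hBA
  have := Int.coeff_lower_bound_of_isCoprime (N := n - 1) (Nat.isCoprime_iff_coprime.2 hcop)
    (by positivity) (by positivity) (by positivity) (by positivity) (by omega)
    (by exact_mod_cast hAB) hBA htrade
  linarith

theorem eq_of_mem_admissibleCoeffs (hd : 0 < d)
    (hm : ∀ i, 2 ≤ i → i ≤ n → m i = h * m₁ + (i - 1) * d) {c b σ l b₀ τ l₀ : ℕ}
    (hb : IsLeast (admissibleCoeffs n m c) b) (hσ : 3 ≤ σ ∧ σ ≤ n)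
    (heq : c + b * m 2 = m σ + l * m n) (hτ : 3 ≤ τ ∧ τ ≤ n)
    (heq₀ : c + b₀ * m 2 = m τ + l₀ * m n) (hb₀ : 0 < b₀) (hle : b₀ ≤ b) :
    σ = τ ∧ l = l₀ ∧ b = b₀ := by
  have hmem : b₀ ∈ admissibleCoeffs n m c := by
    refine ⟨hb₀, ?_⟩
    rw [heq₀]
    exact exists_sum_eq_add_mul m (mem_Icc.2 hτ) (mem_Icc.2 ⟨by omega, le_rfl⟩) l₀
  obtain rfl : b = b₀ := le_antisymm (hb.2 hmem) hle
  exact (eq_and_eq_of_add_mul_eq hd hm ⟨by omega, hσ.2⟩ ⟨by omega, hτ.2⟩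
    (heq.symm.trans heq₀)).imp_right (⟨·, rfl⟩)

theorem recursion_step (hn : 3 ≤ n) (hd : 0 < d)
    (hm : ∀ i, 2 ≤ i → i ≤ n → m i = h * m₁ + (i - 1) * d) (hh : 0 < h) (he : d = h * e)
    (hcop : m₁.Coprime e) (hm₁ : 0 < m₁) {k b σ l b' σ' l' : ℕ}
    (hb : IsLeast (admissibleCoeffs n m (k * h * m₁)) b) (hσ : 3 ≤ σ ∧ σ ≤ n)
    (heq : k * h * m₁ + b * m 2 = m σ + l * m n) (hσ' : 2 ≤ σ' ∧ σ' ≤ n)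
    (heq' : (k + 1) * h * m₁ + b' * m 2 = m σ' + l' * m n)
    (hbal : Balanced n e m₁ (k + 1) b' σ' l') :
    (σ' ≠ n → σ = σ' + 1 ∧ l = l' ∧ b = b' + 1) ∧
      (σ' = n → σ = 3 ∧ l = l' + 1 ∧ b = b' + 2) := by
  obtain ⟨hpos, δ, hrep⟩ := hb.1
  have hlow : (n - 2) * b' + σ' ≤ (n - 2) * b + 1 := by
    have := coeff_lower_bound (by omega) hm hh he hcop hm₁ hpos hrep
    obtain ⟨h₁, h₂⟩ := hbal
    zify [show 2 ≤ n by omega, show 1 ≤ n by omega] at h₁ h₂ ⊢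
    linear_combination this + ((n : ℤ) - 1) * h₁ + h₂
  have hn2 : 0 < n - 2 := by omega
  constructor
  · intro hσn
    have heq₀ : k * h * m₁ + (b' + 1) * m 2 = m (σ' + 1) + l' * m n := by
      have := apply_two_add_apply hm hσ'.1 (by omega)
      linarith
    refine eq_of_mem_admissibleCoeffs hd hm hb hσ heq ⟨by omega, by omega⟩ heq₀ (by omega) ?_
    have : (n - 2) * b' < (n - 2) * b := by omega
    exact Nat.lt_of_mul_lt_mul_left this
  · rintro rfl
    have heq₀ : k * h * m₁ + (b' + 2) * m 2 = m 3 + (l' + 1) * m σ' := by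
      have := apply_two_add_apply hm le_rfl (by omega)
      linarith
    refine eq_of_mem_admissibleCoeffs hd hm hb hσ heq ⟨le_rfl, hn⟩ heq₀ (by omega) ?_
    have : (σ' - 2) * (b' + 1) < (σ' - 2) * b := by
      rw [mul_add]; omega
    exact Nat.lt_of_mul_lt_mul_left this

theorem Balanced.pred (hn : 1 ≤ n) {k b σ l b' σ' l' : ℕ}
    (hbal : Balanced n e m₁ (k + 1) b' σ' l')
    (hrec : (σ' ≠ n → σ = σ' + 1 ∧ l = l' ∧ b = b' + 1) ∧
      (σ' = n → σ = 3 ∧ l = l' + 1 ∧ b = b' + 2)) :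
    Balanced n e m₁ k b σ l := by
  obtain ⟨h₁, h₂⟩ := hbal
  by_cases hσn : σ' = n
  · obtain ⟨rfl, rfl, rfl⟩ := hrec.2 hσn
    exact ⟨by omega, by rw [add_mul]; omega⟩
  · obtain ⟨rfl, rfl, rfl⟩ := hrec.1 hσn
    exact ⟨by omega, by omega⟩

end GenArithSeq

theorem stmt_11_general (n h d m1 p s : ℕ) (m : ℕ → ℕ) (β σ lam : ℕ → ℕ)
    (hn : 3 ≤ n) (hd : 1 ≤ d) (hm1 : 1 ≤ m1)
    (hdvd : h ∣ d) (hgcd : Nat.gcd m1 d = 1)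
    (hm : ∀ i, 2 ≤ i → i ≤ n → m i = h * m1 + (i - 1) * d)
    (hdiv : m1 = p * (n - 1) + s) (hs1 : 1 ≤ s) (hs2 : s ≤ n - 1)
    (hβlast : β ((p * h + d + h) / h) = 0)
    (hσlast : σ ((p * h + d + h) / h) = s + 1)
    (hlamlast : lam ((p * h + d + h) / h) = p)
    (hβ : ∀ j, j < (p * h + d + h) / h →
      IsLeast {b : ℕ | 0 < b ∧
          ∃ δ : ℕ → ℕ, j * h * m1 + b * m 2 = ∑ i ∈ Finset.Icc 3 n, δ i * m i} (β j))
    (hσrange : ∀ j, j < (p * h + d + h) / h → 3 ≤ σ j ∧ σ j ≤ n)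
    (heq : ∀ j, j ≤ (p * h + d + h) / h →
      j * h * m1 + β j * m 2 = m (σ j) + lam j * m n) :
    ∀ j, 1 ≤ j → j ≤ (p * h + d + h) / h →
      (σ j ≠ n → σ (j - 1) = σ j + 1 ∧ lam (j - 1) = lam j ∧ β (j - 1) = β j + 1) ∧
      (σ j = n → σ (j - 1) = 3 ∧ lam (j - 1) = lam j + 1 ∧ β (j - 1) = β j + 2) := by
  have hh : 0 < h := Nat.pos_of_dvd_of_pos hdvd hd
  obtain ⟨e, he⟩ := hdvd
  have hcop : m1.Coprime e := Nat.Coprime.coprime_dvd_right (Dvd.intro_left h he.symm) hgcd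
  have hlast : (p * h + d + h) / h = p + e + 1 := by
    rw [he, show p * h + h * e + h = (p + e + 1) * h by ring, Nat.mul_div_cancel _ hh]
  rw [hlast] at hβlast hσlast hlamlast hβ hσrange heq ⊢
  have hrec : ∀ k < p + e + 1,
      GenArithSeq.Balanced n e m1 (k + 1) (β (k + 1)) (σ (k + 1)) (lam (k + 1)) →
      (σ (k + 1) ≠ n → σ k = σ (k + 1) + 1 ∧ lam k = lam (k + 1) ∧ β k = β (k + 1) + 1) ∧
      (σ (k + 1) = n → σ k = 3 ∧ lam k = lam (k + 1) + 1 ∧ β k = β (k + 1) + 2) := by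
    intro k hk hbal
    have hσ' : 2 ≤ σ (k + 1) ∧ σ (k + 1) ≤ n := by
      rcases Nat.lt_or_ge (k + 1) (p + e + 1) with hk' | hk'
      · exact (hσrange _ hk').imp_left (by omega)
      · rw [show k + 1 = p + e + 1 by omega, hσlast]; omega
    exact GenArithSeq.recursion_step hn hd hm hh he hcop hm1 (hβ k hk) (hσrange k hk)
      (heq k hk.le) hσ' (heq (k + 1) hk) hbal
  have hbal : ∀ j ≤ p + e + 1, GenArithSeq.Balanced n e m1 j (β j) (σ j) (lam j) := fun j hj =>
    Nat.decreasingInduction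
      (motive := fun j _ => GenArithSeq.Balanced n e m1 j (β j) (σ j) (lam j))
      (fun k hk hbal => hbal.pred (by omega) (hrec k hk hbal))
      ⟨by omega, by rw [hσlast, hlamlast, hβlast, hdiv]; ring⟩ hj
  intro j hj1 hj2
  obtain ⟨k, rfl⟩ : ∃ k, j = k + 1 := ⟨j - 1, by omega⟩
  simpa only [Nat.add_sub_cancel] using hrec k hj2 (hbal _ hj2)

/-- Recursion for the invariants βⱼ, σⱼ, λⱼ of a generalized arithmetic sequence. -/
theorem stmt_11 (n h d m1 p s : ℕ) (m : ℕ → ℕ) (β σ lam : ℕ → ℕ)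
    (hn : 3 ≤ n) (hh : 2 ≤ h) (hd : 1 ≤ d) (hm1 : 1 ≤ m1)
    (hdvd : h ∣ d) (hgcd : Nat.gcd m1 d = 1)
    (hm0 : m 1 = m1)
    (hm : ∀ i, 2 ≤ i → i ≤ n → m i = h * m1 + (i - 1) * d)
    (hdiv : m1 = p * (n - 1) + s) (hs1 : 1 ≤ s) (hs2 : s ≤ n - 1)
    (hβlast : β ((p * h + d + h) / h) = 0)
    (hσlast : σ ((p * h + d + h) / h) = s + 1)
    (hlamlast : lam ((p * h + d + h) / h) = p)
    (hβ : ∀ j, j < (p * h + d + h) / h →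
      IsLeast {b : ℕ | 0 < b ∧
          ∃ δ : ℕ → ℕ, j * h * m1 + b * m 2 = ∑ i ∈ Finset.Icc 3 n, δ i * m i} (β j))
    (hσrange : ∀ j, j < (p * h + d + h) / h → 3 ≤ σ j ∧ σ j ≤ n)
    (heq : ∀ j, j ≤ (p * h + d + h) / h →
      j * h * m1 + β j * m 2 = m (σ j) + lam j * m n) :
    ∀ j, 1 ≤ j → j ≤ (p * h + d + h) / h →
      (σ j ≠ n → σ (j - 1) = σ j + 1 ∧ lam (j - 1) = lam j ∧ β (j - 1) = β j + 1) ∧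
      (σ j = n → σ (j - 1) = 3 ∧ lam (j - 1) = lam j + 1 ∧ β (j - 1) = β j + 2) :=
  stmt_11_general n h d m1 p s m β σ lam hn hd hm1 hdvd hgcd hm hdiv hs1 hs2 hβlast hσlast hlamlast
    hβ hσrange heq
end

section
/- Let n ≥ 3 and let m_1 < ... < m_n be a generalized arithmetic sequence with m_i = h·m_1 + (i-1)d, h > 1, h | d, gcd(m_1, d) = 1, m_1 = p(n-1)+s with s ∈ {1,...,n-1}, δ := ph+d+h, δ' := δ/h. Define β_j for 0 ≤ j ≤ δ' by β_{δ'} = 0 and the recursion of the paper. Then the closed formulas hold for all j ∈ {1,...,δ'}: β_{δ'-j} = j + ⌊(j+s-2)/(n-2)⌋, λ_{δ'-j} = p + ⌊(j+s-2)/(n-2)⌋, and σ_{δ'-j} is the unique element of {3,...,n} congruent to s+1+j modulo n-2. -/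
lemma modeq_unique' {K a b : ℕ} (h : a % K = b % K) (hab : a ≤ b)
    (hlt : b - a < K) : a = b := by
  have h2 : K ∣ b - a := (Nat.modEq_iff_dvd' hab).mp h
  have := Nat.eq_zero_of_dvd_of_lt h2 hlt
  omega

/-- Closed formulas for βⱼ, λⱼ, σⱼ obtained from the recursion. -/
theorem stmt_12 (n h d m1 p s : ℕ) (β σ lam : ℕ → ℕ)
    (hn : 3 ≤ n) (hh : 2 ≤ h) (hd : 1 ≤ d) (hm1 : 1 ≤ m1)
    (hdvd : h ∣ d) (hgcd : Nat.gcd m1 d = 1)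
    (hdiv : m1 = p * (n - 1) + s) (hs1 : 1 ≤ s) (hs2 : s ≤ n - 1)
    (hβlast : β ((p * h + d + h) / h) = 0)
    (hσlast : σ ((p * h + d + h) / h) = s + 1)
    (hlamlast : lam ((p * h + d + h) / h) = p)
    (hrec : ∀ j, 1 ≤ j → j ≤ (p * h + d + h) / h →
      (σ j ≠ n → σ (j - 1) = σ j + 1 ∧ lam (j - 1) = lam j ∧ β (j - 1) = β j + 1) ∧
      (σ j = n → σ (j - 1) = 3 ∧ lam (j - 1) = lam j + 1 ∧ β (j - 1) = β j + 2)) :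
    ∀ j, 1 ≤ j → j ≤ (p * h + d + h) / h →
      β ((p * h + d + h) / h - j) = j + (j + s - 2) / (n - 2) ∧
      lam ((p * h + d + h) / h - j) = p + (j + s - 2) / (n - 2) ∧
      3 ≤ σ ((p * h + d + h) / h - j) ∧ σ ((p * h + d + h) / h - j) ≤ n ∧
      σ ((p * h + d + h) / h - j) % (n - 2) = (s + 1 + j) % (n - 2) := by
  set D := (p * h + d + h) / h with hD
  have hK : 0 < n - 2 := by omega
  have hn2 : n % (n - 2) = 2 % (n - 2) := by
    have h1 := Nat.add_mod_left (n - 2) 2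
    have h2 : n - 2 + 2 = n := by omega
    rw [h2] at h1
    exact h1
  intro j
  induction j with
  | zero => intro h1; exact absurd h1 (by omega)
  | succ j ih =>
    intro _ hjD
    rcases Nat.eq_zero_or_pos j with hj0 | hj1
    · -- base case j + 1 = 1
      subst hj0
      have hrecD := hrec D (by omega) le_rfl
      by_cases hsn : s + 1 = n
      · obtain ⟨hσ', hlam', hβ'⟩ := hrecD.2 (by rw [hσlast]; exact hsn)
        have hq : (0 + 1 + s - 2) / (n - 2) = 1 := by
          have e : 0 + 1 + s - 2 = n - 2 := by omega
          rw [e, Nat.div_self hK]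
        have hidx : D - (0 + 1) = D - 1 := by omega
        rw [hidx, hq, hβ', hlam', hσ', hβlast, hlamlast]
        refine ⟨by omega, by omega, by omega, by omega, ?_⟩
        have e2 : s + 1 + (0 + 1) = (n - 2) + 3 := by omega
        rw [e2, Nat.add_mod_left]
      · obtain ⟨hσ', hlam', hβ'⟩ := hrecD.1 (by rw [hσlast]; exact hsn)
        have hq : (0 + 1 + s - 2) / (n - 2) = 0 := Nat.div_eq_of_lt (by omega)
        have hidx : D - (0 + 1) = D - 1 := by omega
        have hsn' : s + 1 < n := lt_of_le_of_ne (by omega) hsn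
        rw [hidx, hq, hβ', hlam', hσ', hβlast, hlamlast, hσlast]
        exact ⟨by omega, by omega, by omega, by omega, rfl⟩
    · -- inductive step
      obtain ⟨hβj, hlamj, hσ3, hσn, hσmod⟩ := ih (by omega) (by omega)
      have hrecj := hrec (D - j) (by omega) (by omega)
      have hidx : D - (j + 1) = (D - j) - 1 := by omega
      by_cases hdd : (j + s - 1) % (n - 2) = 0
      · -- the σ = n case
        have hmod : σ (D - j) % (n - 2) = n % (n - 2) := by
          rw [hσmod, hn2]
          have e1 : s + 1 + j = (j + s - 1) + 2 := by omega
          rw [e1, Nat.add_mod, hdd, zero_add, Nat.mod_mod_of_dvd _ dvd_rfl]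
        have hσeq : σ (D - j) = n := modeq_unique' hmod hσn (by omega)
        obtain ⟨hσ', hlam', hβ'⟩ := hrecj.2 hσeq
        have hdiv2 : (j + 1 + s - 2) / (n - 2) = (j + s - 2) / (n - 2) + 1 := by
          have e1 : j + 1 + s - 2 = (j + s - 2) + 1 := by omega
          rw [e1, Nat.succ_div, if_pos]
          have e2 : j + s - 2 + 1 = j + s - 1 := by omega
          rw [e2]
          exact Nat.dvd_of_mod_eq_zero hdd
        rw [hidx, hdiv2, hβ', hlam', hσ', hβj, hlamj]
        refine ⟨by omega, by omega, by omega, by omega, ?_⟩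
        have e3 : s + 1 + (j + 1) = (j + s - 1) + 3 := by omega
        rw [e3, Nat.add_mod, hdd, zero_add, Nat.mod_mod_of_dvd _ dvd_rfl]
      · -- the σ ≠ n case
        have hσne : σ (D - j) ≠ n := by
          intro hEq
          have h1 : 2 % (n - 2) = (s + 1 + j) % (n - 2) := by
            rw [← hσmod, hEq]
            exact hn2.symm
          have h2 : (n - 2) ∣ (s + 1 + j) - 2 := (Nat.modEq_iff_dvd' (by omega)).mp h1
          have e3 : s + 1 + j - 2 = j + s - 1 := by omega
          rw [e3] at h2
          exact hdd (Nat.mod_eq_zero_of_dvd h2)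
        obtain ⟨hσ', hlam', hβ'⟩ := hrecj.1 hσne
        have hdiv2 : (j + 1 + s - 2) / (n - 2) = (j + s - 2) / (n - 2) := by
          have e1 : j + 1 + s - 2 = (j + s - 2) + 1 := by omega
          rw [e1, Nat.succ_div, if_neg, add_zero]
          intro hdd2
          have e2 : j + s - 2 + 1 = j + s - 1 := by omega
          rw [e2] at hdd2
          exact hdd (Nat.mod_eq_zero_of_dvd hdd2)
        have hσlt : σ (D - j) < n := lt_of_le_of_ne hσn hσne
        rw [hidx, hdiv2, hβ', hlam', hσ', hβj, hlamj]
        refine ⟨by omega, by omega, by omega, by omega, ?_⟩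
        rw [Nat.add_mod, hσmod, ← Nat.add_mod]
        congr 1
end

section
/- Let n ≥ 3 and let m_1 < ... < m_n be a generalized arithmetic sequence with m_i = h·m_1 + (i-1)d for i ≥ 2, h > 1, h | d, gcd(m_1, d) = 1. Then β_0 := min{ b ∈ ℤ⁺ : b·m_2 ∈ ℕm_3 + ... + ℕm_n } equals ⌊(m_n - h)/(nh - 2h)⌋ + 1. -/
/-!
Writing `d = h e` and `a = m₁ + e`, the generators are `m₂ = h a` and `mᵢ = h (a + (i - 2) e)`, so
after dividing by `h` this is the case of the arithmetic sequence `a, a + e, …, a + k e`, `k = n - 2`.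
There, `b a = ∑ δⱼ (a + j e)` reads `b a = a s + e t` with `s = ∑ δⱼ ≤ t = ∑ j δⱼ ≤ k s`; coprimality
forces `a ∣ t`, hence `t ≥ a` and `b ≥ s + e`, while `k s ≥ t ≥ a` bounds `s` below by `⌈a / k⌉`.
Writing `a - 1 = k q + r` with `0 ≤ r < k`, the identity
`(e + q + 1) a = (a + (r + 1) e) + q (a + k e)` shows that this bound is attained.
-/

open Finset

namespace ArithmeticSequence

variable {a e k : ℕ}

theorem sum_mul_add_mul_eq (δ : ℕ → ℕ) :
    ∑ j ∈ Icc 1 k, δ j * (a + j * e) =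
      a * ∑ j ∈ Icc 1 k, δ j + e * ∑ j ∈ Icc 1 k, δ j * j := by
  simp only [mul_sum, ← sum_add_distrib]
  exact sum_congr rfl fun j _ => by ring

theorem sum_le_sum_mul_id (δ : ℕ → ℕ) : ∑ j ∈ Icc 1 k, δ j ≤ ∑ j ∈ Icc 1 k, δ j * j :=
  sum_le_sum fun _ hj => Nat.le_mul_of_pos_right _ (mem_Icc.1 hj).1

theorem sum_mul_id_le (δ : ℕ → ℕ) : ∑ j ∈ Icc 1 k, δ j * j ≤ k * ∑ j ∈ Icc 1 k, δ j := by
  rw [mul_sum]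
  exact sum_le_sum fun _ hj => by rw [mul_comm k]; exact Nat.mul_le_mul_left _ (mem_Icc.1 hj).2

theorem add_le_and_le_of_mul_eq (ha : 0 < a) (hae : a.Coprime e) {b s t : ℕ} (hb : 0 < b)
    (hst : s ≤ t) (h : b * a = a * s + e * t) : s + e ≤ b ∧ a ≤ t := by
  have hsb : s ≤ b := Nat.le_of_mul_le_mul_right (by rw [h]; nlinarith) ha
  have hdiff : (b - s) * a = e * t := by
    rw [Nat.sub_mul, h, mul_comm a s, Nat.add_sub_cancel_left]
  obtain ⟨f, rfl⟩ : a ∣ t := hae.dvd_of_dvd_mul_left ⟨b - s, by rw [← hdiff, mul_comm]⟩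
  have hbs : b - s = e * f := Nat.eq_of_mul_eq_mul_right ha (by rw [hdiff]; ring)
  have hf : 0 < f := by
    rcases Nat.eq_zero_or_pos f with rfl | hf
    · simp at h; omega
    · exact hf
  constructor
  · have := Nat.le_mul_of_pos_right e hf; omega
  · exact Nat.le_mul_of_pos_right a hf

theorem exists_mul_eq_sum (e : ℕ) (hk : 0 < k) (ha : 0 < a) :
    ∃ δ : ℕ → ℕ, (e + (a - 1) / k + 1) * a = ∑ j ∈ Icc 1 k, δ j * (a + j * e) := by
  have hr : (a - 1) % k < k := Nat.mod_lt _ hk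
  have hqr : a = (a - 1) % k + 1 + k * ((a - 1) / k) := by
    have := Nat.mod_add_div (a - 1) k; omega
  generalize (a - 1) / k = q, (a - 1) % k = r at hr hqr ⊢
  refine ⟨Pi.single (r + 1) 1 + Pi.single k q, ?_⟩
  simp only [Pi.add_apply, add_mul, sum_add_distrib, Pi.single_apply, ite_mul, one_mul, zero_mul,
    sum_ite_eq', mem_Icc]
  rw [if_pos (by omega), if_pos (by omega)]
  subst hqr
  ring

theorem add_mul_sub_one_div (hk : 0 < k) (ha : 0 < a) : (a + k * e - 1) / k = e + (a - 1) / k := by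
  rw [show a + k * e - 1 = a - 1 + k * e by omega, Nat.add_mul_div_left _ _ hk, add_comm]

theorem isLeast_pos_mul_eq_sum (hk : 0 < k) (ha : 0 < a) (hae : a.Coprime e) :
    IsLeast {b : ℕ | 0 < b ∧ ∃ δ : ℕ → ℕ, b * a = ∑ j ∈ Icc 1 k, δ j * (a + j * e)}
      ((a + k * e - 1) / k + 1) := by
  rw [add_mul_sub_one_div hk ha]
  refine ⟨⟨Nat.succ_pos _, exists_mul_eq_sum e hk ha⟩, ?_⟩
  rintro b ⟨hb, δ, hδ⟩
  rw [sum_mul_add_mul_eq] at hδ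
  obtain ⟨hse, hat⟩ := add_le_and_le_of_mul_eq ha hae hb (sum_le_sum_mul_id δ) hδ
  have : (a - 1) / k < ∑ j ∈ Icc 1 k, δ j :=
    Nat.div_lt_of_lt_mul (by have := sum_mul_id_le (k := k) δ; omega)
  omega

end ArithmeticSequence

theorem sum_Icc_three_mul_eq {n h a e : ℕ} {m : ℕ → ℕ} (hn : 3 ≤ n)
    (hm : ∀ i, 3 ≤ i → i ≤ n → m i = h * (a + (i - 2) * e)) (δ : ℕ → ℕ) :
    ∑ i ∈ Icc 3 n, δ i * m i = h * ∑ j ∈ Icc 1 (n - 2), δ (j + 2) * (a + j * e) := by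
  rw [show Icc 3 n = (Icc 1 (n - 2)).map (addRightEmbedding 2) by
    rw [map_add_right_Icc]; congr 1; omega, sum_map, mul_sum]
  refine sum_congr rfl fun j hj => ?_
  have := mem_Icc.1 hj
  simp only [addRightEmbedding_apply, hm (j + 2) (by omega) (by omega), Nat.add_sub_cancel]
  ring

theorem stmt_13_general (n h d m1 : ℕ) (m : ℕ → ℕ)
    (hn : 3 ≤ n) (hh : 2 ≤ h) (hm1 : 1 ≤ m1)
    (hdvd : h ∣ d) (hgcd : Nat.gcd m1 d = 1)
    (hm : ∀ i, 2 ≤ i → i ≤ n → m i = h * m1 + (i - 1) * d) :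
    IsLeast {b : ℕ | 0 < b ∧
        ∃ δ : ℕ → ℕ, b * m 2 = ∑ i ∈ Finset.Icc 3 n, δ i * m i}
      ((m n - h) / (n * h - 2 * h) + 1) := by
  obtain ⟨e, rfl⟩ := hdvd
  have hmi : ∀ i, 2 ≤ i → i ≤ n → m i = h * (m1 + e + (i - 2) * e) := fun i h2 hi => by
    rw [hm i h2 hi, show i - 1 = i - 2 + 1 by omega]; ring
  have hset : {b : ℕ | 0 < b ∧ ∃ δ : ℕ → ℕ, b * m 2 = ∑ i ∈ Icc 3 n, δ i * m i} =
      {b : ℕ | 0 < b ∧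
        ∃ δ : ℕ → ℕ, b * (m1 + e) = ∑ j ∈ Icc 1 (n - 2), δ j * (m1 + e + j * e)} := by
    ext b
    simp only [Set.mem_ofPred_eq, sum_Icc_three_mul_eq hn (fun i h3 => hmi i (by omega)),
      hmi 2 le_rfl (by omega), Nat.sub_self, zero_mul, add_zero, mul_left_comm b h,
      Nat.mul_left_cancel_iff (by omega : 0 < h)]
    exact and_congr_right fun _ =>
      ⟨fun ⟨δ, hδ⟩ => ⟨(δ <| · + 2), hδ⟩, fun ⟨δ, hδ⟩ => ⟨(δ <| · - 2), by simpa using hδ⟩⟩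
  have hval : (m n - h) / (n * h - 2 * h) = (m1 + e + (n - 2) * e - 1) / (n - 2) := by
    rw [hmi n (by omega) le_rfl, ← Nat.sub_mul, ← Nat.mul_sub_one, mul_comm _ h,
      Nat.mul_div_mul_left _ _ (by omega : 0 < h)]
  rw [hset, hval]
  exact ArithmeticSequence.isLeast_pos_mul_eq_sum (by omega) (by omega)
    (Nat.coprime_add_self_left.2 (Nat.Coprime.coprime_dvd_right (dvd_mul_left e h) hgcd))

/-- β₀ = ⌊(mₙ - h)/(nh - 2h)⌋ + 1. -/
theorem stmt_13 (n h d m1 : ℕ) (m : ℕ → ℕ)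
    (hn : 3 ≤ n) (hh : 2 ≤ h) (hd : 1 ≤ d) (hm1 : 1 ≤ m1)
    (hdvd : h ∣ d) (hgcd : Nat.gcd m1 d = 1)
    (hm0 : m 1 = m1)
    (hm : ∀ i, 2 ≤ i → i ≤ n → m i = h * m1 + (i - 1) * d) :
    IsLeast {b : ℕ | 0 < b ∧
        ∃ δ : ℕ → ℕ, b * m 2 = ∑ i ∈ Finset.Icc 3 n, δ i * m i}
      ((m n - h) / (n * h - 2 * h) + 1) :=
  stmt_13_general n h d m1 m hn hh hm1 hdvd hgcd hm
end

section
/- Let n = 3 and m_1 < m_2 < m_3 be positive integers with gcd(m_1, m_2, m_3) = 1. Suppose that: (i) 2m_1 ∈ {m_2, m_3}, and (ii) 2m_2 ∈ {m_3, m_1 + m_3}. Then {m_1, m_2, m_3} equals {1,2,3}, {1,2,4}, or {2,3,4}. -/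
/-- Classification for n = 3: the quadric conditions force {m₁,m₂,m₃} ∈
{{1,2,3},{1,2,4},{2,3,4}}. -/
theorem stmt_15 (m1 m2 m3 : ℕ)
    (h0 : 0 < m1) (h12 : m1 < m2) (h23 : m2 < m3)
    (hgcd : Nat.gcd (Nat.gcd m1 m2) m3 = 1)
    (h1 : 2 * m1 = m2 ∨ 2 * m1 = m3)
    (h2 : 2 * m2 = m3 ∨ 2 * m2 = m1 + m3) :
    (m1, m2, m3) = (1, 2, 3) ∨ (m1, m2, m3) = (1, 2, 4) ∨ (m1, m2, m3) = (2, 3, 4) := by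
  rcases h1 with h1 | h1 <;> rcases h2 with h2 | h2
  · -- m2 = 2m1, m3 = 4m1
    have hd : m1 ∣ 1 := hgcd ▸ Nat.dvd_gcd (Nat.dvd_gcd dvd_rfl ⟨2, by omega⟩) ⟨4, by omega⟩
    have := Nat.le_of_dvd one_pos hd
    simp only [Prod.mk.injEq]; omega
  · -- m2 = 2m1, m3 = 3m1
    have hd : m1 ∣ 1 := hgcd ▸ Nat.dvd_gcd (Nat.dvd_gcd dvd_rfl ⟨2, by omega⟩) ⟨3, by omega⟩
    have := Nat.le_of_dvd one_pos hd
    simp only [Prod.mk.injEq]; omega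
  · omega
  · -- m3 = 2m1, 2m2 = 3m1
    have h2m : 2 ∣ m1 := by
      have : 2 ∣ 3 * m1 := ⟨m2, by omega⟩
      omega
    obtain ⟨k, hk⟩ := h2m
    have hd : k ∣ 1 := hgcd ▸ Nat.dvd_gcd (Nat.dvd_gcd ⟨2, by omega⟩ ⟨3, by omega⟩) ⟨4, by omega⟩
    have := Nat.le_of_dvd one_pos hd
    simp only [Prod.mk.injEq]; omega
end

section
/- Let n ≥ 2 and let m_1 < ... < m_n be a generalized arithmetic sequence with m_i = h·m_1 + (i-1)d for i ≥ 2, h, d ≥ 1, and gcd of all m_i equal to 1. If the numerical conditions 2m_1 = m_j + μ·m_l (with j, l ≠ 1, μ ∈ {0,1}) forced by quadric generation hold, then h = 1; moreover if additionally n ≤ m_1, then no such representation of 2m_1 exists. Concretely: if h ≥ 2 then 2m_1 < m_2, so 2m_1 ∉ {m_j : j ≥ 2} ∪ {m_j + m_l : j, l ≥ 2}; and if h = 1 and n ≤ m_1, then 2m_1 ≠ m_j for all j ∈ {2,...,n} and 2m_1 ≠ m_j + m_l for all j, l ∈ {2,...,n}. -/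
/-- Numerical facts in the forward direction of the Koszul characterization
for generalized arithmetic sequences. -/
theorem stmt_17 (n h d m1 : ℕ) (m : ℕ → ℕ)
    (hn : 2 ≤ n) (hh : 1 ≤ h) (hd : 1 ≤ d) (hm1 : 1 ≤ m1)
    (hm0 : m 1 = m1)
    (hm : ∀ i, 2 ≤ i → i ≤ n → m i = h * m1 + (i - 1) * d)
    (hgcd : (Finset.Icc 1 n).gcd m = 1) :
    (2 ≤ h → 2 * m1 < m 2) ∧
    (2 ≤ h → ∀ j, 2 ≤ j → j ≤ n → 2 * m1 ≠ m j) ∧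
    (2 ≤ h → ∀ j l, 2 ≤ j → j ≤ n → 2 ≤ l → l ≤ n → 2 * m1 ≠ m j + m l) ∧
    (h = 1 → n ≤ m1 → ∀ j, 2 ≤ j → j ≤ n → 2 * m1 ≠ m j) ∧
    (h = 1 → n ≤ m1 → ∀ j l, 2 ≤ j → j ≤ n → 2 ≤ l → l ≤ n → 2 * m1 ≠ m j + m l) := by
  have key : ∀ j, 2 ≤ j → j ≤ n → 2 ≤ h → 2 * m1 < m j := by
    intro j hj hjn hh2
    rw [hm j hj hjn]
    have h1 : 2 * m1 ≤ h * m1 := Nat.mul_le_mul_right m1 hh2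
    have h2 : 1 ≤ (j - 1) * d := Nat.mul_pos (by omega) hd
    omega
  refine ⟨fun hh2 => key 2 le_rfl hn hh2, fun hh2 j hj hjn => Nat.ne_of_lt (key j hj hjn hh2),
    fun hh2 j l hj hjn hl hln => ?_, fun h1 hnm j hj hjn => ?_, fun h1 hnm j l hj hjn hl hln => ?_⟩
  · have := key j hj hjn hh2
    have : 0 < m l := by rw [hm l hl hln]; positivity
    omega
  · -- h = 1 case, single term
    subst h1
    rw [hm j hj hjn, one_mul]
    intro heq
    have hjd : (j - 1) * d = m1 := by omega
    have hdvd : d ∣ (Finset.Icc 1 n).gcd m := by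
      apply Finset.dvd_gcd
      intro i hi
      simp only [Finset.mem_Icc] at hi
      rcases Nat.lt_or_ge i 2 with h2 | h2
      · have : i = 1 := by omega
        rw [this, hm0, ← hjd]
        exact dvd_mul_left d (j-1)
      · rw [hm i h2 hi.2, one_mul, ← hjd]
        exact Nat.dvd_add (dvd_mul_left d (j-1)) (dvd_mul_left d (i-1))
    rw [hgcd] at hdvd
    have hd1 : d = 1 := Nat.eq_one_of_dvd_one hdvd
    rw [hd1, mul_one] at hjd
    omega
  · subst h1
    rw [hm j hj hjn, hm l hl hln, one_mul]
    have : 1 ≤ (j - 1) * d := Nat.mul_pos (by omega) hd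
    omega
end
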